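/- arXiv:1701.08593 — 8 statements merged into one kernel-verified Lean document; each statement's English description precedes it below -/
import Mathlib

section
/- Let X be a separable metric space carrying a measure μ which is s-regular on X, let 0 < t < s, and let A ⊆ X be a t-regular set (with a measure ν which is t-regular on A, with constants a_ν, b_ν, r_ν, and ν(X∖A)=0). Then A is uniformly ρ-porous for some ρ > 0 which depends only on s, t, a_μ, b_μ, a_ν and b_ν. -/
/-!
If `A` had no hole of relative size `ρ` around some `x ∈ A` at scale `r`, then every point of
`B(x, r/2)` would lie within `ρr` of `A`. A Vitali family of disjoint balls `B(z, 2ρr)` centred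
in `B(x, r/2)` then carries as many disjoint balls `B(a_z, ρr)` centred in `A`, so the
`t`-regularity of `ν` bounds their number by `≲ ρ^{-t}`, while the enlarged balls `B(z, 8ρr)`
cover `B(x, r/2)` and the `s`-regularity of `μ` forces their number to be `≳ ρ^{-s}`.
Since `t < s`, this is impossible once `ρ` is small in terms of the regularity constants.
-/

open Metric MeasureTheory Set Filter
open scoped ENNReal NNReal Topology

/-- `por A x r`: the porosity of `A` at the point `x` at scale `r`, defined as
`sup {ρ ≥ 0 : ∃ y, B(y, ρr) ∩ A = ∅ and ρr + d(x,y) ≤ r}` (closed balls). -/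
noncomputable def por {X : Type*} [MetricSpace X] (A : Set X) (x : X) (r : ℝ) : ℝ :=
  sSup {ρ : ℝ | 0 ≤ ρ ∧ ∃ y : X, closedBall y (ρ * r) ∩ A = ∅ ∧ ρ * r + dist x y ≤ r}

/-- `porAt A x = liminf_{r ↓ 0} por A x r`. -/
noncomputable def porAt {X : Type*} [MetricSpace X] (A : Set X) (x : X) : ℝ :=
  Filter.liminf (fun r => por A x r) (nhdsWithin (0 : ℝ) (Set.Ioi 0))

/-- `porosity A = inf_{x ∈ A} porAt A x`. -/
noncomputable def porosity {X : Type*} [MetricSpace X] (A : Set X) : ℝ :=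
  sInf (porAt A '' A)

/-- `A` is uniformly `ρ`-porous with porosity scale `rp`:
`por A x r ≥ ρ` for all `x ∈ A` and `0 < r < rp`. -/
def UniformlyPorousWith {X : Type*} [MetricSpace X] (A : Set X) (ρ rp : ℝ) : Prop :=
  ∀ x ∈ A, ∀ r : ℝ, 0 < r → r < rp → ρ ≤ por A x r

/-- `μ` is `s`-regular on `E` with constants `a ≤ b` and scale `rμ`:
`a r^s ≤ μ(B(x,r)) ≤ b r^s` for all `x ∈ E` and `0 < r < rμ`. -/
def IsRegularOn {X : Type*} [MetricSpace X] [MeasurableSpace X]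
    (μ : Measure X) (s : ℝ) (E : Set X) (a b rμ : ℝ) : Prop :=
  ∀ x ∈ E, ∀ r : ℝ, 0 < r → r < rμ →
    ENNReal.ofReal (a * r ^ s) ≤ μ (closedBall x r) ∧
      μ (closedBall x r) ≤ ENNReal.ofReal (b * r ^ s)

lemma le_por {X : Type*} [MetricSpace X] {A : Set X} {x y : X} {ρ r : ℝ} (hr : 0 < r)
    (hρ : 0 ≤ ρ) (hy : closedBall y (ρ * r) ∩ A = ∅) (hxy : ρ * r + dist x y ≤ r) :
    ρ ≤ por A x r := by
  refine le_csSup ⟨1, fun ρ' ⟨_, y', _, hy'⟩ => ?_⟩ ⟨hρ, y, hy, hxy⟩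
  have : ρ' * r ≤ 1 * r := by linarith [dist_nonneg (x := x) (y := y')]
  exact le_of_mul_le_mul_right this hr

namespace Set.PairwiseDisjoint

variable {X ι : Type*} [MeasurableSpace X] {μ : Measure X} {B : ι → Set X} {S : Set X}
  {c : ℝ≥0∞}

lemma card_mul_le_measure {F : Finset ι} (hdisj : (F : Set ι).PairwiseDisjoint B)
    (hB : ∀ i ∈ F, MeasurableSet (B i)) (hc : ∀ i ∈ F, c ≤ μ (B i)) (hS : ∀ i ∈ F, B i ⊆ S) :
    F.card * c ≤ μ S :=
  calc (F.card : ℝ≥0∞) * c = ∑ _i ∈ F, c := by rw [Finset.sum_const, nsmul_eq_mul]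
  _ ≤ ∑ i ∈ F, μ (B i) := Finset.sum_le_sum hc
  _ = μ (⋃ i ∈ F, B i) := (measure_biUnion_finset hdisj hB).symm
  _ ≤ μ S := measure_mono (iUnion₂_subset hS)

lemma finite_of_le_measure {u : Set ι} (hdisj : u.PairwiseDisjoint B)
    (hB : ∀ i ∈ u, MeasurableSet (B i)) (hc0 : c ≠ 0) (hc : ∀ i ∈ u, c ≤ μ (B i))
    (hS : ∀ i ∈ u, B i ⊆ S) (hμS : μ S ≠ ∞) : u.Finite := by
  by_contra hu
  obtain ⟨n, hn⟩ := ENNReal.exists_nat_mul_gt hc0 hμS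
  obtain ⟨F, hFu, rfl⟩ := Set.Infinite.exists_subset_card_eq hu n
  exact hn.not_ge <| card_mul_le_measure (hdisj.subset hFu) (fun i hi => hB i (hFu hi))
    (fun i hi => hc i (hFu hi)) fun i hi => hS i (hFu hi)

end Set.PairwiseDisjoint

namespace IsRegularOn

variable {X ι : Type*} [MetricSpace X] [MeasurableSpace X] {μ : Measure X}
  {s a b rμ : ℝ} {E : Set X} {x : X}

lemma card_mul_le [BorelSpace X] (hμ : IsRegularOn μ s E a b rμ) (hb : 0 ≤ b) (hx : x ∈ E)
    {r ε : ℝ} (hr : 0 < r) (hrμ : r < rμ) (hε : 0 < ε) (hεμ : ε < rμ) {F : Finset ι}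
    {g : ι → X} (hg : ∀ i ∈ F, g i ∈ E)
    (hdisj : (F : Set ι).PairwiseDisjoint (fun i => closedBall (g i) ε))
    (hsub : ∀ i ∈ F, closedBall (g i) ε ⊆ closedBall x r) :
    F.card * (a * ε ^ s) ≤ b * r ^ s := by
  have h := (hdisj.card_mul_le_measure (fun _ _ => measurableSet_closedBall)
    (fun i hi => (hμ (g i) (hg i hi) ε hε hεμ).1) hsub).trans (hμ x hx r hr hrμ).2
  rwa [← nsmul_eq_mul, ← ENNReal.ofReal_nsmul, ENNReal.ofReal_le_ofReal_iff (by positivity),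
    nsmul_eq_mul] at h

lemma le_card_mul (hμ : IsRegularOn μ s E a b rμ) (hb : 0 ≤ b) (hx : x ∈ E) {R δ : ℝ}
    (hR : 0 < R) (hRμ : R < rμ) (hδ : 0 < δ) (hδμ : δ < rμ) {F : Finset X} (hF : ∀ z ∈ F, z ∈ E)
    (hcover : closedBall x R ⊆ ⋃ z ∈ F, closedBall z δ) :
    a * R ^ s ≤ F.card * (b * δ ^ s) := by
  have h : ENNReal.ofReal (a * R ^ s) ≤ F.card * ENNReal.ofReal (b * δ ^ s) :=
    calc ENNReal.ofReal (a * R ^ s) ≤ μ (closedBall x R) := (hμ x hx R hR hRμ).1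
    _ ≤ ∑ z ∈ F, μ (closedBall z δ) := (measure_mono hcover).trans (measure_biUnion_finset_le _ _)
    _ ≤ ∑ _z ∈ F, ENNReal.ofReal (b * δ ^ s) :=
        Finset.sum_le_sum fun z hz => (hμ z (hF z hz) δ hδ hδμ).2
    _ = F.card * ENNReal.ofReal (b * δ ^ s) := by rw [Finset.sum_const, nsmul_eq_mul]
  rwa [← nsmul_eq_mul, ← ENNReal.ofReal_nsmul, ENNReal.ofReal_le_ofReal_iff (by positivity),
    nsmul_eq_mul] at h

end IsRegularOn

lemma exists_pairwiseDisjoint_closedBall_cover {X : Type*} [MetricSpace X] (T : Set X) {δ : ℝ}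
    (hδ : 0 ≤ δ) :
    ∃ u ⊆ T, u.PairwiseDisjoint (closedBall · δ) ∧ T ⊆ ⋃ z ∈ u, closedBall z (4 * δ) := by
  obtain ⟨u, huT, hdisj, hcover⟩ := Vitali.exists_disjoint_subfamily_covering_enlargement_closedBall
    T id (fun _ => δ) δ (fun _ _ => le_rfl) 4 (by norm_num)
  refine ⟨u, huT, hdisj, fun y hy => ?_⟩
  obtain ⟨z, hz, hyz⟩ := hcover y hy
  exact mem_iUnion₂.2 ⟨z, hz, hyz (mem_closedBall_self hδ)⟩

lemma mul_rpow_le_of_forall_closedBall_inter_nonempty {X : Type*} [MetricSpace X]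
    [MeasurableSpace X] [BorelSpace X] {μ ν : Measure X} {A : Set X} {x : X}
    {s t a b aν bν rμ rν r ε : ℝ} (hμ : IsRegularOn μ s univ a b rμ)
    (hν : IsRegularOn ν t A aν bν rν) (hb : 0 ≤ b) (haν : 0 < aν) (hbν : 0 ≤ bν) (hx : x ∈ A)
    (hrμ : r < rμ) (hrν : r < rν) (hε : 0 < ε) (hεr : 16 * ε ≤ r)
    (hdense : ∀ z ∈ closedBall x (r / 2), (closedBall z ε ∩ A).Nonempty) :
    a * aν * (r / 2) ^ s * ε ^ t ≤ b * bν * (8 * ε) ^ s * r ^ t := by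
  choose! g hg using hdense
  obtain ⟨u, hux, hudisj, hucover⟩ :=
    exists_pairwiseDisjoint_closedBall_cover (closedBall x (r / 2)) (by positivity : 0 ≤ 2 * ε)
  have hgz : ∀ z ∈ u, closedBall (g z) ε ⊆ closedBall z (2 * ε) := fun z hz =>
    closedBall_subset_closedBall' (by linarith [mem_closedBall.1 (hg z (hux hz)).1])
  have hgx : ∀ z ∈ u, closedBall (g z) ε ⊆ closedBall x r := fun z hz =>
    (hgz z hz).trans <| closedBall_subset_closedBall' (by linarith [mem_closedBall.1 (hux hz)])
  have hgdisj : u.PairwiseDisjoint (fun z => closedBall (g z) ε) := hudisj.mono_on hgz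
  have hr : 0 < r := by linarith
  have hfin : u.Finite := hgdisj.finite_of_le_measure (fun _ _ => measurableSet_closedBall)
    (ENNReal.ofReal_pos.2 (by positivity)).ne'
    (fun z hz => (hν (g z) (hg z (hux hz)).2 ε hε (by linarith)).1) hgx
    (((hν x hx r hr hrν).2).trans_lt ENNReal.ofReal_lt_top).ne
  lift u to Finset X using hfin
  have hpack : u.card * (aν * ε ^ t) ≤ bν * r ^ t :=
    hν.card_mul_le hbν hx hr hrν hε (by linarith) (fun z hz => (hg z (hux hz)).2) hgdisj hgx
  have hcover : a * (r / 2) ^ s ≤ u.card * (b * (8 * ε) ^ s) :=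
    hμ.le_card_mul hb (mem_univ x) (by positivity) (by linarith) (by positivity) (by linarith)
      (fun z _ => mem_univ z) (by simpa [show 4 * (2 * ε) = 8 * ε by ring] using hucover)
  calc a * aν * (r / 2) ^ s * ε ^ t = a * (r / 2) ^ s * (aν * ε ^ t) := by ring
  _ ≤ u.card * (b * (8 * ε) ^ s) * (aν * ε ^ t) := by gcongr
  _ = b * (8 * ε) ^ s * (u.card * (aν * ε ^ t)) := by ring
  _ ≤ b * (8 * ε) ^ s * (bν * r ^ t) := by gcongr
  _ = b * bν * (8 * ε) ^ s * r ^ t := by ring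

lemma mul_le_mul_rpow_sub_of_le {s t a b ρ r : ℝ} (hρ : 0 < ρ) (hr : 0 < r)
    (h : a * (r / 2) ^ s * (ρ * r) ^ t ≤ b * (8 * (ρ * r)) ^ s * r ^ t) :
    a ≤ b * 16 ^ s * ρ ^ (s - t) := by
  have hP : 0 < r ^ s * r ^ t * ρ ^ t / 2 ^ s := by positivity
  have h16 : (16 : ℝ) ^ s = 2 ^ s * 8 ^ s := by
    rw [← Real.mul_rpow (by norm_num) (by norm_num)]; norm_num
  refine le_of_mul_le_mul_right (h.trans_eq' ?_ |>.trans_eq ?_) hP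
  · rw [Real.div_rpow hr.le zero_le_two, Real.mul_rpow hρ.le hr.le]; ring
  · rw [Real.mul_rpow (by norm_num) (by positivity), Real.mul_rpow hρ.le hr.le, h16,
      Real.rpow_sub hρ]
    field_simp

lemma exists_pos_le_mul_rpow_lt {c K e : ℝ} (hc : 0 < c) (hK : 0 < K) (he : 0 < e) (C : ℝ) :
    ∃ ρ, 0 < ρ ∧ ρ ≤ c ∧ C * ρ ^ e < K := by
  have hlim : Tendsto (fun ρ : ℝ => C * ρ ^ e) (𝓝[>] 0) (𝓝 0) := by
    have := ((Real.continuousAt_rpow_const 0 e (Or.inr he.le)).tendsto.const_mul C).mono_left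
      (nhdsWithin_le_nhds (s := Ioi 0))
    simpa [Real.zero_rpow he.ne'] using this
  obtain ⟨ρ, ⟨h0, hρc⟩, hρK⟩ :=
    (Eventually.and (Ioc_mem_nhdsGT hc) (hlim.eventually_lt_const hK)).exists
  exact ⟨ρ, h0, hρc, hρK⟩

theorem stmt3_general (s t a b aν bν : ℝ) (hts : t < s)
    (ha : 0 < a) (hab : a ≤ b) (haν : 0 < aν) (habν : aν ≤ bν) :
    ∃ ρ : ℝ, 0 < ρ ∧
      ∀ (X : Type*) [MetricSpace X] [TopologicalSpace.SeparableSpace X]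
        [MeasurableSpace X] [BorelSpace X]
        (μ ν : Measure X) (rμ rν : ℝ) (A : Set X), 0 < rμ → 0 < rν →
        IsRegularOn μ s (Set.univ : Set X) a b rμ →
        IsRegularOn ν t A aν bν rν → ν Aᶜ = 0 →
        ∃ rp : ℝ, 0 < rp ∧ UniformlyPorousWith A ρ rp := by
  obtain ⟨ρ, hρ, hρ16, hρK⟩ := exists_pos_le_mul_rpow_lt (by norm_num : (0 : ℝ) < 1 / 16)
    (mul_pos ha haν) (sub_pos.2 hts) (b * bν * 16 ^ s)
  refine ⟨ρ, hρ, fun X _ _ _ _ μ ν rμ rν A hrμ hrν hμ hν _ =>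
    ⟨min rμ rν, lt_min hrμ hrν, fun x hx r hr hrp => ?_⟩⟩
  by_contra hnot
  have hdense : ∀ z ∈ closedBall x (r / 2), (closedBall z (ρ * r) ∩ A).Nonempty := by
    refine fun z hz => nonempty_iff_ne_empty.2 fun hempty => hnot <| le_por hr hρ.le hempty ?_
    nlinarith [mem_closedBall'.1 hz]
  have h := mul_rpow_le_of_forall_closedBall_inter_nonempty hμ hν (ha.trans_le hab).le haν
    (haν.trans_le habν).le hx (hrp.trans_le (min_le_left _ _)) (hrp.trans_le (min_le_right _ _))
    (mul_pos hρ hr) (by nlinarith) hdense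
  exact hρK.not_ge <| mul_le_mul_rpow_sub_of_le hρ hr h

/-- If `μ` is `s`-regular on a separable metric space `X`, `0 < t < s`,
and `A ⊆ X` is a `t`-regular set (witnessed by `ν` with constants `a_ν, b_ν, r_ν` and
`ν(X ∖ A) = 0`), then `A` is uniformly `ρ`-porous for some `ρ > 0` depending only on
`s, t, a_μ, b_μ, a_ν, b_ν`. -/
theorem stmt3 (s t a b aν bν : ℝ) (ht : 0 < t) (hts : t < s)
    (ha : 0 < a) (hab : a ≤ b) (haν : 0 < aν) (habν : aν ≤ bν) :
    ∃ ρ : ℝ, 0 < ρ ∧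
      ∀ (X : Type*) [MetricSpace X] [TopologicalSpace.SeparableSpace X]
        [MeasurableSpace X] [BorelSpace X]
        (μ ν : Measure X) (rμ rν : ℝ) (A : Set X), 0 < rμ → 0 < rν →
        IsRegularOn μ s (Set.univ : Set X) a b rμ →
        IsRegularOn ν t A aν bν rν → ν Aᶜ = 0 →
        ∃ rp : ℝ, 0 < rp ∧ UniformlyPorousWith A ρ rp :=
  stmt3_general s t a b aν bν hts ha hab haν habν
end

section
/- Let X be a separable metric space carrying a doubling measure μ with doubling constant c_μ and scale r_μ, and let A ⊆ X be uniformly ρ-porous with porosity scale r_p (0 < ρ ≤ 1). Let x_0 ∈ X and 0 < r_0 < (ρ/12) min{r_p, r_μ}. Then there is a constant C_3 > 0 depending only on c_μ such that μ((A ∩ B(x_0,r_0))(r)) ≤ C_3 c_μ^{−log ρ / log 2} μ(B(x_0,r_0)) (r/r_0)^δ for all 0 < r < r_0, where t = log c_μ / log 2 and δ = c (log(1/ρ))^{-1} ρ^t with c > 0 depending only on c_μ. -/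
open Metric MeasureTheory Set Filter
open scoped ENNReal NNReal Topology

/-- `μ` is doubling with constant `cμ` and scale `rμ`:
`0 < μ(B(x,2r)) ≤ cμ μ(B(x,r)) < ∞` for all `x` and `0 < r < rμ`. -/
def IsDoubling {X : Type*} [MetricSpace X] [MeasurableSpace X]
    (μ : Measure X) (cμ rμ : ℝ) : Prop :=
  ∀ (x : X) (r : ℝ), 0 < r → r < rμ →
    0 < μ (closedBall x (2 * r)) ∧
      μ (closedBall x (2 * r)) ≤ ENNReal.ofReal cμ * μ (closedBall x r) ∧
        ENNReal.ofReal cμ * μ (closedBall x r) < ⊤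

/-!
Porosity at scale `s` places, inside each ball `B(x, s/2)` centred on `A`, a hole `B(y, ρs/8)`
that misses the `ρs/8`-neighbourhood of `A`. Around a maximal `s`-separated subset of `A`
(countable by separability) these holes are disjoint and lie in `A(s) \ A(ρs/8)`, while the balls
`B(x, 2s)` cover `A(ρs/8)`; after `m ≈ log₂(48/ρ)` doublings each hole carries a share
`c_μ^{-m} ≥ c_μ^{-6} ρ^t` of its ball. Hence `(1 + c_μ^{-m}) μ(A(ρs/8)) ≤ μ(A(s))`, and iterating
along the scales `(ρ/8)^k r₀` gives the decay `(1 + c_μ^{-m})^{-k} ≤ 2 (r/r₀)^δ`, because a single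
factor `1 + c_μ^{-m}` dominates `(8/ρ)^δ`.
-/

section Porosity

variable {X : Type*} [MetricSpace X] {A B : Set X} {ρ rp : ℝ}

lemma thickening_closedBall_subset_closedBall (x : X) (δ r : ℝ) :
    thickening δ (closedBall x r) ⊆ closedBall x (δ + r) := fun z hz => by
  obtain ⟨a, ha, hza⟩ := mem_thickening_iff.1 hz
  exact mem_closedBall.2 (by linarith [dist_triangle z a x, mem_closedBall.1 ha])

lemma UniformlyPorousWith.exists_closedBall_inter_eq_empty (hA : UniformlyPorousWith A ρ rp)
    (hρ : 0 < ρ) {x : X} (hx : x ∈ A) {s : ℝ} (hs : 0 < s) (hsrp : s < rp) :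
    ∃ y, closedBall y (ρ / 2 * s) ∩ A = ∅ ∧ ρ / 2 * s + dist x y ≤ s := by
  have hpor := hA x hx s hs hsrp
  rw [por] at hpor
  have hne : {ρ' : ℝ | 0 ≤ ρ' ∧ ∃ y : X, closedBall y (ρ' * s) ∩ A = ∅ ∧
      ρ' * s + dist x y ≤ s}.Nonempty := by
    by_contra h
    rw [not_nonempty_iff_eq_empty] at h
    rw [h, Real.sSup_empty] at hpor
    linarith
  obtain ⟨ρ', ⟨-, y, hy, hdist⟩, hlt⟩ := exists_lt_of_lt_csSup hne (by linarith : ρ / 2 < _)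
  refine ⟨y, subset_empty_iff.1 ?_, by nlinarith⟩
  exact hy ▸ inter_subset_inter_left A (closedBall_subset_closedBall (by nlinarith))

lemma por_le_one_half {x : X} (hx : x ∈ A) {r : ℝ} (hr : 0 < r) : por A x r ≤ 1 / 2 := by
  refine Real.sSup_le ?_ (by norm_num)
  rintro ρ' ⟨-, y, hy, hdist⟩
  have hxy : ρ' * r < dist x y := by
    by_contra! h
    exact (eq_empty_iff_forall_notMem.1 hy) x ⟨mem_closedBall.2 (dist_comm x y ▸ h), hx⟩
  nlinarith

lemma por_le_por_of_subset (hBA : B ⊆ A) (x : X) {r : ℝ} (hr : 0 < r) :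
    por A x r ≤ por B x r := by
  rcases eq_empty_or_nonempty {ρ' : ℝ | 0 ≤ ρ' ∧ ∃ y : X, closedBall y (ρ' * r) ∩ A = ∅ ∧
      ρ' * r + dist x y ≤ r} with h | h
  · rw [por, h, Real.sSup_empty]
    exact Real.sSup_nonneg fun _ hρ' => hρ'.1
  refine csSup_le_csSup ⟨1, ?_⟩ h ?_
  · rintro ρ' ⟨-, y, -, hdist⟩
    nlinarith [dist_nonneg (x := x) (y := y)]
  · rintro ρ' ⟨hρ', y, hy, hdist⟩
    exact ⟨hρ', y, subset_empty_iff.1 (hy ▸ inter_subset_inter_right _ hBA), hdist⟩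

lemma UniformlyPorousWith.subset (hA : UniformlyPorousWith A ρ rp) (hBA : B ⊆ A) :
    UniformlyPorousWith B ρ rp := fun x hx r hr hrp =>
  (hA x (hBA hx) r hr hrp).trans (por_le_por_of_subset hBA x hr)

lemma UniformlyPorousWith.le_one_half (hA : UniformlyPorousWith A ρ rp) (hne : A.Nonempty)
    (hrp : 0 < rp) : ρ ≤ 1 / 2 := by
  obtain ⟨x, hx⟩ := hne
  exact (hA x hx (rp / 2) (by linarith) (by linarith)).trans (por_le_one_half hx (by linarith))

lemma UniformlyPorousWith.exists_closedBall_disjoint_thickening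
    (hA : UniformlyPorousWith A ρ rp) (hρ : 0 < ρ) {x : X} (hx : x ∈ A) {s : ℝ} (hs : 0 < s)
    (hsrp : s < 2 * rp) :
    ∃ y, closedBall y (ρ / 8 * s) ⊆ closedBall x (s / 2) ∧
      Disjoint (closedBall y (ρ / 8 * s)) (thickening (ρ / 8 * s) A) := by
  obtain ⟨y, hy, hdist⟩ :=
    hA.exists_closedBall_inter_eq_empty hρ hx (by linarith : 0 < s / 2) (by linarith)
  refine ⟨y, closedBall_subset_closedBall' (by rw [dist_comm]; nlinarith), ?_⟩
  refine disjoint_left.2 fun z hzy hzA => ?_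
  obtain ⟨a, ha, hza⟩ := mem_thickening_iff.1 hzA
  have hay : dist a y ≤ ρ / 2 * (s / 2) := by
    linarith [dist_triangle a z y, dist_comm a z, mem_closedBall.1 hzy]
  exact (eq_empty_iff_forall_notMem.1 hy) a ⟨mem_closedBall.2 hay, ha⟩

end Porosity

lemma one_add_inv_mul_measure_le {X : Type*} [MeasurableSpace X] {μ : Measure X}
    {N' H N : Set X} {K : ℝ≥0∞} (hH : MeasurableSet H) (hdisj : Disjoint N' H)
    (hsub : N' ∪ H ⊆ N) (hK : μ N' ≤ K * μ H) : (1 + K⁻¹) * μ N' ≤ μ N :=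
  calc (1 + K⁻¹) * μ N' = μ N' + K⁻¹ * μ N' := by rw [add_mul, one_mul]
    _ ≤ μ N' + K⁻¹ * K * μ H := by rw [mul_assoc]; gcongr
    _ ≤ μ N' + μ H := by gcongr; exact mul_le_of_le_one_left' (ENNReal.inv_mul_le_one K)
    _ = μ (N' ∪ H) := (measure_union hdisj hH).symm
    _ ≤ μ N := measure_mono hsub

lemma exists_countable_separated_cover {X : Type*} [MetricSpace X]
    [TopologicalSpace.SeparableSpace X] (A : Set X) {s : ℝ} (hs : 0 < s) :
    ∃ T ⊆ A, T.Countable ∧ T.Pairwise (fun x y => s < dist x y) ∧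
      A ⊆ ⋃ x ∈ T, closedBall x s := by
  obtain ⟨T, hT⟩ := zorn_subset {T : Set X | T ⊆ A ∧ IsSeparated (s.toNNReal : ℝ≥0∞) T}
    fun c hc hchain => ⟨⋃₀ c, ⟨sUnion_subset fun t ht => (hc ht).1,
      (pairwise_sUnion hchain.directedOn).2 fun t ht => (hc ht).2⟩,
      fun _ => subset_sUnion_of_mem⟩
  have hsep : T.Pairwise (fun x y => s < dist x y) := hT.prop.2.imp fun x y h => by
    rwa [edist_dist, ← ENNReal.ofReal, ENNReal.ofReal_lt_ofReal_iff_of_nonneg hs.le] at h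
  refine ⟨T, hT.prop.1, ?_, hsep, ?_⟩
  · refine PairwiseDisjoint.countable_of_isOpen (s := fun x => ball x (s / 2)) ?_
      (fun _ _ => isOpen_ball) fun x _ => ⟨x, mem_ball_self (by linarith)⟩
    exact fun x hx y hy hxy => ball_disjoint_ball (by linarith [hsep hx hy hxy])
  · simpa [Real.coe_toNNReal _ hs.le] using
      (IsCover.of_maximal_isSeparated hT).subset_iUnion_closedBall

section Doubling

variable {X : Type*} [MetricSpace X] [MeasurableSpace X] {μ : Measure X} {cμ rμ : ℝ}

lemma IsDoubling.measure_thickening_inter_closedBall_le (hμ : IsDoubling μ cμ rμ) (A : Set X)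
    {x : X} {r : ℝ} (hr : 0 < r) (hrμ : r < rμ) :
    μ (thickening r (A ∩ closedBall x r)) ≤ ENNReal.ofReal cμ * μ (closedBall x r) := by
  refine (measure_mono ?_).trans (hμ x r hr hrμ).2.1
  rw [two_mul]
  exact (thickening_subset_of_subset r inter_subset_right).trans
    (thickening_closedBall_subset_closedBall x r r)

lemma IsDoubling.measure_closedBall_two_pow_mul_le (hμ : IsDoubling μ cμ rμ) (y : X) {u : ℝ}
    (hu : 0 < u) (n : ℕ) (hn : 2 ^ n * u < 2 * rμ) :
    μ (closedBall y (2 ^ n * u)) ≤ ENNReal.ofReal cμ ^ n * μ (closedBall y u) := by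
  induction n with
  | zero => simp
  | succ n ih =>
    have hnu : 2 ^ n * u < rμ := by rw [pow_succ] at hn; linarith
    calc μ (closedBall y (2 ^ (n + 1) * u)) = μ (closedBall y (2 * (2 ^ n * u))) := by
          ring_nf
      _ ≤ ENNReal.ofReal cμ * μ (closedBall y (2 ^ n * u)) :=
        (hμ y _ (by positivity) hnu).2.1
      _ ≤ ENNReal.ofReal cμ * (ENNReal.ofReal cμ ^ n * μ (closedBall y u)) := by
        gcongr; exact ih (by linarith [mul_pos (pow_pos (two_pos (α := ℝ)) n) hu])
      _ = ENNReal.ofReal cμ ^ (n + 1) * μ (closedBall y u) := by ring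

end Doubling

section PorousDecay

variable {X : Type*} [MetricSpace X] [TopologicalSpace.SeparableSpace X] [MeasurableSpace X]
  [BorelSpace X] {μ : Measure X} {cμ rμ : ℝ} {A : Set X} {ρ rp : ℝ}

lemma UniformlyPorousWith.one_add_inv_mul_measure_thickening_le
    (hA : UniformlyPorousWith A ρ rp) (hμ : IsDoubling μ cμ rμ) (hρ : 0 < ρ) (hρ1 : ρ ≤ 1)
    {s : ℝ} (hs : 0 < s) (hsrp : s < 2 * rp) {m : ℕ} (hm : 24 / ρ ≤ 2 ^ m)
    (hmrμ : 2 ^ m * (ρ / 8 * s) < 2 * rμ) :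
    (1 + (ENNReal.ofReal cμ ^ m)⁻¹) * μ (thickening (ρ / 8 * s) A) ≤ μ (thickening s A) := by
  obtain ⟨T, hTA, hTc, hTsep, hTcover⟩ := exists_countable_separated_cover A hs
  choose! y hy_sub hy_disj using
    fun x (hx : x ∈ T) => hA.exists_closedBall_disjoint_thickening hρ (hTA hx) hs hsrp
  have hy_dist : ∀ x ∈ T, dist x (y x) ≤ s / 2 := fun x hx => by
    simpa [dist_comm] using hy_sub x hx (mem_closedBall_self (by positivity))
  have hholes : T.PairwiseDisjoint fun x => closedBall (y x) (ρ / 8 * s) :=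
    fun x hx x' hx' hxx' => disjoint_left.2 fun z hz hz' => by
      linarith [hTsep hx hx' hxx', dist_triangle_right x x' z, dist_comm x z, dist_comm x' z,
        mem_closedBall.1 (hy_sub x hx hz), mem_closedBall.1 (hy_sub x' hx' hz')]
  have hball : ∀ x ∈ T, μ (closedBall x (2 * s)) ≤
      ENNReal.ofReal cμ ^ m * μ (closedBall (y x) (ρ / 8 * s)) := fun x hx => by
    have h3s : 3 * s ≤ 2 ^ m * (ρ / 8 * s) := by
      calc 3 * s = 24 / ρ * (ρ / 8 * s) := by field_simp; ring
        _ ≤ 2 ^ m * (ρ / 8 * s) := by gcongr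
    exact (measure_mono (closedBall_subset_closedBall' (by linarith [hy_dist x hx]))).trans
      (hμ.measure_closedBall_two_pow_mul_le (y x) (by positivity) m hmrμ)
  refine one_add_inv_mul_measure_le (.biUnion hTc fun _ _ => measurableSet_closedBall)
    (disjoint_iUnion₂_right.2 fun x hx => (hy_disj x hx).symm) ?_ ?_
  · refine union_subset (thickening_mono (by nlinarith) A) (iUnion₂_subset fun x hx => ?_)
    exact (hy_sub x hx).trans ((closedBall_subset_ball (half_lt_self hs)).trans
      (ball_subset_thickening (hTA hx) s))
  · have hcover : thickening (ρ / 8 * s) A ⊆ ⋃ x ∈ T, closedBall x (2 * s) := fun z hz => by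
      obtain ⟨a, ha, hza⟩ := mem_thickening_iff.1 hz
      obtain ⟨x, hx, hax⟩ := mem_iUnion₂.1 (hTcover ha)
      refine mem_iUnion₂.2 ⟨x, hx, mem_closedBall.2 ?_⟩
      linarith [dist_triangle z a x, mem_closedBall.1 hax, (by nlinarith : ρ / 8 * s ≤ s)]
    calc μ (thickening (ρ / 8 * s) A) ≤ ∑' x : T, μ (closedBall x (2 * s)) :=
          (measure_mono hcover).trans (measure_biUnion_le μ hTc _)
      _ ≤ ∑' x : T, ENNReal.ofReal cμ ^ m * μ (closedBall (y x) (ρ / 8 * s)) :=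
          ENNReal.tsum_le_tsum fun x => hball x x.2
      _ = ENNReal.ofReal cμ ^ m * μ (⋃ x ∈ T, closedBall (y x) (ρ / 8 * s)) := by
          rw [ENNReal.tsum_mul_left,
            measure_biUnion hTc hholes fun _ _ => measurableSet_closedBall]

lemma UniformlyPorousWith.one_add_inv_pow_mul_measure_thickening_le
    (hA : UniformlyPorousWith A ρ rp) (hμ : IsDoubling μ cμ rμ) (hρ : 0 < ρ) (hρ1 : ρ ≤ 1)
    {r₀ : ℝ} (hr₀ : 0 < r₀) (hr₀rp : r₀ < 2 * rp) {m : ℕ} (hm : 24 / ρ ≤ 2 ^ m)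
    (hmrμ : 2 ^ m * (ρ / 8 * r₀) < 2 * rμ) (k : ℕ) :
    (1 + (ENNReal.ofReal cμ ^ m)⁻¹) ^ k * μ (thickening ((ρ / 8) ^ k * r₀) A) ≤
      μ (thickening r₀ A) := by
  induction k with
  | zero => simp
  | succ k ih =>
    have hq : (ρ / 8) ^ k ≤ 1 := pow_le_one₀ (by positivity) (by linarith)
    have hs : (ρ / 8) ^ k * r₀ ≤ r₀ := mul_le_of_le_one_left hr₀.le hq
    have hstep := hA.one_add_inv_mul_measure_thickening_le hμ hρ hρ1
      (by positivity : 0 < (ρ / 8) ^ k * r₀) (by linarith) hm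
      (lt_of_le_of_lt (by gcongr) hmrμ)
    rw [← mul_assoc, ← pow_succ'] at hstep
    rw [pow_succ, mul_assoc]
    exact (mul_le_mul_right hstep _).trans ih

lemma UniformlyPorousWith.measure_thickening_pow_mul_le
    (hA : UniformlyPorousWith A ρ rp) (hμ : IsDoubling μ cμ rμ) (hc : 0 < cμ) (hρ : 0 < ρ)
    (hρ1 : ρ ≤ 1) {r₀ : ℝ} (hr₀ : 0 < r₀) (hr₀rp : r₀ < 2 * rp) (hr₀rμ : 3 * r₀ < rμ) {m : ℕ}
    (hm : 24 / ρ ≤ 2 ^ m) (hm' : 2 ^ m ≤ 48 / ρ) (k : ℕ) :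
    μ (thickening ((ρ / 8) ^ k * r₀) A) ≤
      ENNReal.ofReal (((1 + (cμ ^ m)⁻¹) ^ k)⁻¹) * μ (thickening r₀ A) := by
  have hmrμ : 2 ^ m * (ρ / 8 * r₀) < 2 * rμ :=
    calc 2 ^ m * (ρ / 8 * r₀) ≤ 48 / ρ * (ρ / 8 * r₀) := by gcongr
      _ = 6 * r₀ := by field_simp; ring
      _ < 2 * rμ := by linarith
  have hstep := hA.one_add_inv_pow_mul_measure_thickening_le hμ hρ hρ1 hr₀ hr₀rp hm hmrμ k
  rw [← ENNReal.ofReal_pow hc.le, ← ENNReal.ofReal_inv_of_pos (by positivity),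
    ← ENNReal.ofReal_one, ← ENNReal.ofReal_add zero_le_one (by positivity),
    ← ENNReal.ofReal_pow (by positivity)] at hstep
  rw [ENNReal.ofReal_inv_of_pos (by positivity), ← ENNReal.div_eq_inv_mul,
    ENNReal.le_div_iff_mul_le (Or.inl (ENNReal.ofReal_pos.2 (by positivity)).ne')
      (Or.inl ENNReal.ofReal_ne_top), mul_comm]
  exact hstep

end PorousDecay

lemma exists_le_two_pow_le_two_mul {x : ℝ} (hx : 1 ≤ x) :
    ∃ m : ℕ, x ≤ 2 ^ m ∧ 2 ^ m ≤ 2 * x := by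
  obtain ⟨n, hn, hn'⟩ := exists_nat_pow_near hx one_lt_two
  exact ⟨n + 1, hn'.le, by rw [pow_succ']; linarith⟩

lemma pow_eq_two_pow_rpow_logb {c : ℝ} (hc : 0 < c) (n : ℕ) :
    c ^ n = ((2 : ℝ) ^ n) ^ Real.logb 2 c := by
  rw [← Real.rpow_pow_comm zero_le_two, Real.rpow_logb two_pos (by norm_num) hc]

lemma pow_le_pow_div_rpow_logb {c ρ : ℝ} (hc : 1 ≤ c) (hρ : 0 < ρ) {m N : ℕ}
    (hm : (2 : ℝ) ^ m ≤ 2 ^ N / ρ) : c ^ m ≤ c ^ N / ρ ^ Real.logb 2 c := by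
  have hc0 : 0 < c := zero_lt_one.trans_le hc
  rw [pow_eq_two_pow_rpow_logb hc0, pow_eq_two_pow_rpow_logb hc0 N,
    ← Real.div_rpow (by positivity) hρ.le]
  exact Real.rpow_le_rpow (by positivity) hm (Real.logb_nonneg one_lt_two hc)

lemma inv_rpow_div_eight_le_one_add {ρ δ ε : ℝ} (hρ : 0 < ρ) (hρ2 : ρ ≤ 1 / 2) (hδ : 0 ≤ δ)
    (hε : ε ≤ 2) (hδε : 8 * δ * Real.log (1 / ρ) ≤ ε) : ((ρ / 8) ^ δ)⁻¹ ≤ 1 + ε := by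
  have hL : Real.log 2 ≤ Real.log (1 / ρ) :=
    Real.log_le_log two_pos (by rw [le_div_iff₀ hρ]; linarith)
  have hε0 : 0 ≤ ε :=
    le_trans (mul_nonneg (by positivity) ((Real.log_pos one_lt_two).le.trans hL)) hδε
  have hlog8 : Real.log (8 / ρ) ≤ 4 * Real.log (1 / ρ) := by
    rw [div_eq_mul_one_div 8 ρ, Real.log_mul (by norm_num) (by positivity),
      show (8 : ℝ) = 2 ^ 3 by norm_num, Real.log_pow]
    push_cast; linarith
  have hε2 : ε / 2 ≤ Real.log (1 + ε) := by
    refine le_trans ?_ (Real.le_log_one_add_of_nonneg hε0)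
    rw [div_le_div_iff₀ two_pos (by linarith)]; nlinarith
  rw [← Real.inv_rpow (by positivity), inv_div, Real.rpow_def_of_pos (by positivity),
    ← Real.le_log_iff_exp_le (by linarith)]
  nlinarith

lemma inv_one_add_pow_le_two_mul_rpow {q δ ε x : ℝ} {k : ℕ} (hq : 0 < q) (hε : ε ≤ 1)
    (hqδ : (q ^ δ)⁻¹ ≤ 1 + ε) (hδ : 0 ≤ δ) (hx : q ^ (k + 1) ≤ x) :
    ((1 + ε) ^ k)⁻¹ ≤ 2 * x ^ δ := by
  have hw : 0 < q ^ δ := Real.rpow_pos_of_pos hq δ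
  calc ((1 + ε) ^ k)⁻¹ ≤ (((q ^ δ)⁻¹) ^ k)⁻¹ := by gcongr
    _ = (q ^ δ) ^ (k + 1) * (q ^ δ)⁻¹ := by
      rw [inv_pow, inv_inv, pow_succ, mul_inv_cancel_right₀ hw.ne']
    _ ≤ (q ^ δ) ^ (k + 1) * 2 := by gcongr; linarith
    _ = 2 * (q ^ (k + 1)) ^ δ := by rw [Real.rpow_pow_comm hq.le, mul_comm]
    _ ≤ 2 * x ^ δ := by gcongr

lemma inv_one_add_inv_pow_pow_le_two_mul_rpow {c ρ x : ℝ} {m k : ℕ} (hc : 1 ≤ c) (hρ : 0 < ρ)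
    (hρ2 : ρ ≤ 1 / 2) (hm : (2 : ℝ) ^ m ≤ 48 / ρ) (hx : (ρ / 8) ^ (k + 1) ≤ x) :
    ((1 + (c ^ m)⁻¹) ^ k)⁻¹ ≤
      2 * x ^ ((c ^ 6)⁻¹ / 8 * (Real.log (1 / ρ))⁻¹ * ρ ^ (Real.log c / Real.log 2)) := by
  have hL : 0 < Real.log (1 / ρ) := Real.log_pos (by rw [lt_div_iff₀ hρ]; linarith)
  have hcm : (c ^ 6)⁻¹ * ρ ^ (Real.log c / Real.log 2) ≤ (c ^ m)⁻¹ := by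
    have := pow_le_pow_div_rpow_logb hc hρ (N := 6) (hm.trans (by gcongr; norm_num))
    rw [← Real.log_div_log] at this
    simpa [inv_div, div_eq_inv_mul] using inv_anti₀ (by positivity) this
  have hε : (c ^ m)⁻¹ ≤ 1 := inv_le_one_of_one_le₀ (one_le_pow₀ hc)
  refine inv_one_add_pow_le_two_mul_rpow (by positivity) hε (inv_rpow_div_eight_le_one_add hρ hρ2
    (by positivity) (hε.trans one_le_two) ?_) (by positivity) hx
  calc 8 * ((c ^ 6)⁻¹ / 8 * (Real.log (1 / ρ))⁻¹ * ρ ^ (Real.log c / Real.log 2)) *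
        Real.log (1 / ρ) = (c ^ 6)⁻¹ * ρ ^ (Real.log c / Real.log 2) := by field_simp
    _ ≤ (c ^ m)⁻¹ := hcm

/-- If `μ` is doubling with constant `c_μ` and `A` is uniformly
`ρ`-porous with scale `r_p`, then for `x₀ ∈ X` and `0 < r₀ < (ρ/12) min{r_p, r_μ}`:
`μ((A ∩ B(x₀,r₀))(r)) ≤ C₃ c_μ^{-log ρ / log 2} μ(B(x₀,r₀)) (r/r₀)^δ` for all `0 < r < r₀`,
where `δ = c (log(1/ρ))⁻¹ ρ^t`, `t = log c_μ / log 2`, and `C₃, c > 0` depend only on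
`c_μ`. -/
theorem stmt11 (cμ : ℝ) (hc : 1 ≤ cμ) :
    ∃ C₃ c : ℝ, 0 < C₃ ∧ 0 < c ∧
      ∀ (X : Type*) [MetricSpace X] [TopologicalSpace.SeparableSpace X]
        [MeasurableSpace X] [BorelSpace X] (μ : Measure X) (rμ : ℝ), 0 < rμ →
        IsDoubling μ cμ rμ →
        ∀ (A : Set X) (ρ rp : ℝ), 0 < ρ → ρ ≤ 1 → 0 < rp → UniformlyPorousWith A ρ rp →
        ∀ (x₀ : X) (r₀ : ℝ), 0 < r₀ → r₀ < ρ / 12 * min rp rμ →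
        ∀ r : ℝ, 0 < r → r < r₀ →
          μ (Metric.thickening r (A ∩ closedBall x₀ r₀)) ≤
            ENNReal.ofReal (C₃ * cμ ^ (-Real.log ρ / Real.log 2) *
                (r / r₀) ^ (c * (Real.log (1 / ρ))⁻¹ * ρ ^ (Real.log cμ / Real.log 2))) *
              μ (closedBall x₀ r₀) := by
  refine ⟨2 * cμ, (cμ ^ 6)⁻¹ / 8, by positivity, by positivity, ?_⟩
  intro X _ _ _ _ μ rμ _ hμ A ρ rp hρ hρ1 hrp hA x₀ r₀ hr₀ hr₀min r hr hrr₀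
  set A' := A ∩ closedBall x₀ r₀
  rcases A'.eq_empty_or_nonempty with hA'e | hA'ne
  · simp [hA'e]
  have hA' : UniformlyPorousWith A' ρ rp := hA.subset inter_subset_left
  have hρ2 : ρ ≤ 1 / 2 := hA'.le_one_half hA'ne hrp
  have hmin : 0 < min rp rμ := pos_of_mul_pos_right (hr₀.trans hr₀min) (by positivity)
  have hr₀rp : 12 * r₀ < rp := by nlinarith [min_le_left rp rμ]
  have hr₀rμ : 12 * r₀ < rμ := by nlinarith [min_le_right rp rμ]
  obtain ⟨m, hm, hm'⟩ :=
    exists_le_two_pow_le_two_mul (by rw [le_div_iff₀ hρ]; linarith : 1 ≤ 24 / ρ)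
  replace hm' : (2 : ℝ) ^ m ≤ 48 / ρ := hm'.trans_eq (by ring)
  obtain ⟨k, hk, hrk⟩ := exists_nat_pow_near_of_lt_one (div_pos hr hr₀)
    ((div_le_one hr₀).2 hrr₀.le) (by positivity : 0 < ρ / 8) (by linarith : ρ / 8 < 1)
  have hrate := inv_one_add_inv_pow_pow_le_two_mul_rpow hc hρ hρ2 hm' hk.le
  have hone : 1 ≤ cμ ^ (-Real.log ρ / Real.log 2) := Real.one_le_rpow hc
    (div_nonneg (neg_nonneg.2 (Real.log_nonpos hρ.le hρ1)) (Real.log_nonneg one_le_two))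
  calc μ (thickening r A') ≤ μ (thickening ((ρ / 8) ^ k * r₀) A') :=
        measure_mono (thickening_mono ((div_le_iff₀ hr₀).1 hrk) _)
    _ ≤ ENNReal.ofReal (((1 + (cμ ^ m)⁻¹) ^ k)⁻¹) * μ (thickening r₀ A') :=
        hA'.measure_thickening_pow_mul_le hμ (by positivity) hρ hρ1 hr₀ (by linarith)
          (by linarith) hm hm' k
    _ ≤ ENNReal.ofReal (((1 + (cμ ^ m)⁻¹) ^ k)⁻¹) *
          (ENNReal.ofReal cμ * μ (closedBall x₀ r₀)) := by
        gcongr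
        exact hμ.measure_thickening_inter_closedBall_le A hr₀ (by linarith)
    _ ≤ _ := by
        rw [← mul_assoc, ← ENNReal.ofReal_mul (by positivity)]
        gcongr ENNReal.ofReal ?_ * _
        calc _ ≤ _ := mul_le_mul_of_nonneg_right hrate (by positivity)
          _ ≤ _ := le_mul_of_one_le_right (by positivity) hone
          _ = _ := by ring
end

section
/- Let X be a separable metric space carrying a measure μ which is s-regular on X with constants a_μ, b_μ and scale r_μ. There exist positive constants D_1 and C_4 depending only on a_μ, b_μ and s such that: for any x_0 ∈ X, any set A ⊆ X which is uniformly ρ-porous with porosity scale r_p (0 < ρ ≤ 1), and any 0 < r_0 < D_1 min{r_p, r_μ}, one has μ((A ∩ B(x_0,r_0))(r)) ≤ C_4 μ(B(x_0,r_0)) (r/r_0)^δ for all 0 < r < r_0, where δ = cρ^s and c > 0 depends only on a_μ, b_μ and s. -/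
open Metric MeasureTheory Set Filter
open scoped ENNReal NNReal Topology

/-!
Let `E = A ∩ B(x₀, r₀)` and `V n = μ (E(r₀ / 2 ^ n))` (closed neighbourhoods). Cover `E(t)`,
`t = r₀ / 2 ^ (i + 1)`, by the balls `B(p, 7t)` around a maximal `5t`-separated subset of `E`.
Porosity puts next to every `p` a hole `B(y, u) ⊆ B(p, 2t)` whose distance to `E` lies between
`u` and `3u`, with `u ≥ ρt/4`; so it sits in one of the `≈ log₂ (8/ρ)` shells
`E(r₀ / 2 ^ (i + j)) \ E(r₀ / 2 ^ (i + j + 3))`, and by regularity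
`μ B(p, 7t) ≤ (b/a) (7 · 2 ^ (j + 2)) ^ s μ B(y, u)`. The holes are disjoint, hence
`V (i + 1) ≤ ∑ⱼ cⱼ (V (i + j) - V (i + j + 3))`. Summing over `i` telescopes to
`∑_{l ≥ 1} V (k + l) ≤ P V k` with `P ≲ ρ ^ (-s)`: the weights `cⱼ` grow geometrically, so the
last shell dominates and no factor `log (1/ρ)` appears. Thus `V` halves every `n ≈ 2P` steps,
i.e. `V N ≲ 2 ^ (-N/n) V 0`, which at `r ≈ r₀ / 2 ^ N` is `(r / r₀) ^ (c ρ ^ s)`.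
-/

theorem sum_range_sub_add_le_mul {f : ℕ → ℝ} (hf : Antitone f) (hf0 : ∀ n, 0 ≤ f n) (h L : ℕ) :
    ∑ n ∈ Finset.range L, (f n - f (n + h)) ≤ h * f 0 := by
  set g : ℕ → ℝ := fun n => ∑ l ∈ Finset.range h, f (n + l)
  have hg : ∀ n, f n - f (n + h) = g n - g (n + 1) := by
    intro n
    have h₁ := Finset.sum_range_succ (fun l => f (n + l)) h
    have h₂ := Finset.sum_range_succ' (fun l => f (n + l)) h
    simp only [g, add_zero, ← add_assoc, add_right_comm n _ 1] at h₁ h₂ ⊢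
    linarith
  have hg0 : g 0 ≤ h * f 0 := calc
    g 0 ≤ ∑ _l ∈ Finset.range h, f 0 := Finset.sum_le_sum fun l _ => hf (Nat.zero_le _)
    _ = h * f 0 := by simp
  have hgL : 0 ≤ g L := Finset.sum_nonneg fun l _ => hf0 _
  rw [Finset.sum_congr rfl fun n _ => hg n, Finset.sum_range_sub']
  linarith

theorem sum_range_le_of_le_sum_sub {V c : ℕ → ℝ} {m h : ℕ} (hV : Antitone V)
    (hV0 : ∀ n, 0 ≤ V n) (hc : ∀ j, 0 ≤ c j)
    (hrec : ∀ i, V (i + 1) ≤ ∑ j ∈ Finset.range m, c j * (V (i + j) - V (i + j + h)))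
    (k L : ℕ) :
    ∑ l ∈ Finset.range L, V (k + 1 + l) ≤ h * (∑ j ∈ Finset.range m, c j) * V k := by
  have hwindow : ∀ j, ∑ l ∈ Finset.range L, (V (k + l + j) - V (k + l + j + h)) ≤ h * V k := by
    intro j
    calc ∑ l ∈ Finset.range L, (V (k + l + j) - V (k + l + j + h))
        = ∑ l ∈ Finset.range L, (V (k + j + l) - V (k + j + (l + h))) :=
          Finset.sum_congr rfl fun l _ => by
            rw [show k + l + j = k + j + l by omega, add_assoc (k + j) l h]
      _ ≤ h * V (k + j + 0) :=
          sum_range_sub_add_le_mul (fun a b hab => hV (by omega)) (fun n => hV0 _) h L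
      _ ≤ h * V k := by gcongr; exact hV (by omega)
  calc ∑ l ∈ Finset.range L, V (k + 1 + l)
      ≤ ∑ l ∈ Finset.range L, ∑ j ∈ Finset.range m, c j * (V (k + l + j) - V (k + l + j + h)) :=
        Finset.sum_le_sum fun l _ => by rw [show k + 1 + l = k + l + 1 by omega]; exact hrec (k + l)
    _ = ∑ j ∈ Finset.range m, c j * ∑ l ∈ Finset.range L, (V (k + l + j) - V (k + l + j + h)) := by
        rw [Finset.sum_comm]; simp only [Finset.mul_sum]
    _ ≤ ∑ j ∈ Finset.range m, c j * (h * V k) :=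
        Finset.sum_le_sum fun j _ => mul_le_mul_of_nonneg_left (hwindow j) (hc j)
    _ = h * (∑ j ∈ Finset.range m, c j) * V k := by rw [← Finset.sum_mul]; ring

theorem two_mul_le_of_sum_range_le {V : ℕ → ℝ} {P : ℝ} (hV : Antitone V) (hV0 : ∀ n, 0 ≤ V n)
    (hsum : ∀ k L, ∑ l ∈ Finset.range L, V (k + 1 + l) ≤ P * V k) {n : ℕ} (hn : 0 < n)
    (hPn : 2 * P ≤ n) (k : ℕ) : 2 * V (k + n) ≤ V k := by
  have hlow : n * V (k + n) ≤ ∑ l ∈ Finset.range n, V (k + 1 + l) := by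
    simpa using Finset.sum_le_sum fun l (hl : l ∈ Finset.range n) =>
      hV (by rw [Finset.mem_range] at hl; omega : k + 1 + l ≤ k + n)
  have hn' : (0 : ℝ) < n := by exact_mod_cast hn
  nlinarith [hsum k n, hV0 k]

theorem le_half_pow_div_mul {V : ℕ → ℝ} (hV : Antitone V) {n : ℕ}
    (hhalf : ∀ k, 2 * V (k + n) ≤ V k) (N : ℕ) : V N ≤ (1 / 2) ^ (N / n) * V 0 := by
  have hmul : ∀ q, V (n * q) ≤ (1 / 2) ^ q * V 0 := by
    intro q
    induction q with
    | zero => simp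
    | succ q ih =>
      rw [mul_add_one, pow_succ]
      linarith [hhalf (n * q)]
  exact (hV (Nat.mul_div_le N n)).trans (hmul _)

theorem half_pow_div_le_two_mul_rpow {n N : ℕ} (hn : 0 < n) {x : ℝ} (hxN : (1 / 2) ^ (N + 1) ≤ x) :
    (1 / 2 : ℝ) ^ (N / n) ≤ 2 * x ^ (1 / n : ℝ) := by
  have hn' : (0 : ℝ) < n := by exact_mod_cast hn
  have hexp : ((N + 1 : ℕ) : ℝ) * (1 / n) ≤ ((N / n + 1 : ℕ) : ℝ) := by
    have : N + 1 ≤ (N / n + 1) * n := by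
      have := Nat.lt_div_mul_add (a := N) hn
      rw [add_mul, one_mul]; omega
    rw [mul_one_div, div_le_iff₀ hn']
    exact_mod_cast this
  calc (1 / 2 : ℝ) ^ (N / n) = 2 * (1 / 2) ^ ((N / n + 1 : ℕ) : ℝ) := by
        rw [Real.rpow_natCast, pow_succ]; ring
    _ ≤ 2 * (1 / 2) ^ (((N + 1 : ℕ) : ℝ) * (1 / n)) :=
        mul_le_mul_of_nonneg_left
          (Real.rpow_le_rpow_of_exponent_ge (by norm_num) (by norm_num) hexp) (by norm_num)
    _ = 2 * ((1 / 2) ^ (N + 1)) ^ (1 / n : ℝ) := by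
        rw [Real.rpow_mul (by norm_num), Real.rpow_natCast]
    _ ≤ 2 * x ^ (1 / n : ℝ) := by gcongr

theorem exists_le_div_two_pow_and_half_pow_succ_le {r r₀ : ℝ} (hr : 0 < r) (hrr₀ : r ≤ r₀) :
    ∃ N : ℕ, r ≤ r₀ / 2 ^ N ∧ (1 / 2 : ℝ) ^ (N + 1) ≤ r / r₀ := by
  obtain ⟨N, hN₁, hN₂⟩ := exists_nat_pow_near ((one_le_div hr).2 hrr₀) one_lt_two
  refine ⟨N, ?_, ?_⟩
  · rw [le_div_iff₀ hr] at hN₁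
    rwa [le_div_iff₀ (by positivity), mul_comm]
  · rw [div_lt_iff₀ hr] at hN₂
    rw [one_div_pow, div_le_div_iff₀ (by positivity) (hr.trans_le hrr₀)]
    linarith

theorem one_div_mul_le_one_div_ceil {K x : ℝ} (hK : 0 < K) (hx : 0 < x) (hx1 : x ≤ 1) :
    1 / (2 * K + 1) * x ≤ 1 / ⌈2 * K / x⌉₊ := by
  rw [le_one_div (by positivity) (by exact_mod_cast Nat.ceil_pos.2 (by positivity))]
  calc (⌈2 * K / x⌉₊ : ℝ) ≤ 2 * K / x + 1 := (Nat.ceil_lt_add_one (by positivity)).le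
    _ ≤ 2 * K / x + 1 / x := by gcongr; exact one_le_one_div hx hx1
    _ = 1 / (1 / (2 * K + 1) * x) := by field_simp

/-- `224 = 7 · 4 · 8`: a covering ball of radius `7t` is compared with a hole of radius
`> t / 2 ^ (j + 2)` in the `j`-th shell, and there are at most `log₂ (8 / ρ)` shells. -/
noncomputable def porosityDecayConst (s a b : ℝ) : ℝ := 3 * 224 ^ s * (b / a) / (2 ^ s - 1)

theorem porosityDecayConst_pos {s a b : ℝ} (hs : 0 < s) (ha : 0 < a) (hb : 0 < b) :
    0 < porosityDecayConst s a b := by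
  have : 0 < (2 : ℝ) ^ s - 1 := sub_pos.2 (Real.one_lt_rpow one_lt_two hs)
  unfold porosityDecayConst
  positivity

theorem sum_shell_weights_le {s a b ρ : ℝ} {m : ℕ} (hs : 0 < s) (hba : 0 ≤ b / a) (hρ : 0 < ρ)
    (hm : 2 ^ m ≤ 8 / ρ) :
    3 * ∑ j ∈ Finset.range m, b / a * (7 * 2 ^ (j + 2)) ^ s ≤ porosityDecayConst s a b / ρ ^ s := by
  have hq : 1 < (2 : ℝ) ^ s := Real.one_lt_rpow one_lt_two hs
  have hterm : ∀ j : ℕ, (7 * 2 ^ (j + 2) : ℝ) ^ s = 28 ^ s * ((2 : ℝ) ^ s) ^ j := fun j => by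
    rw [show (7 * 2 ^ (j + 2) : ℝ) = 28 * 2 ^ j by ring,
      Real.mul_rpow (by norm_num) (by positivity), Real.rpow_pow_comm (by norm_num)]
  have hgeom : ∑ j ∈ Finset.range m, ((2 : ℝ) ^ s) ^ j ≤ 8 ^ s / ρ ^ s / (2 ^ s - 1) := by
    rw [geom_sum_eq hq.ne']
    refine div_le_div_of_nonneg_right ?_ (by linarith)
    calc ((2 : ℝ) ^ s) ^ m - 1 ≤ (2 ^ m) ^ s := by rw [Real.rpow_pow_comm (by norm_num)]; linarith
      _ ≤ 8 ^ s / ρ ^ s := by rw [← Real.div_rpow (by norm_num) hρ.le]; gcongr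
  calc 3 * ∑ j ∈ Finset.range m, b / a * (7 * 2 ^ (j + 2)) ^ s
      = 3 * (b / a) * 28 ^ s * ∑ j ∈ Finset.range m, ((2 : ℝ) ^ s) ^ j := by
        simp_rw [hterm, Finset.mul_sum]; ring_nf
    _ ≤ 3 * (b / a) * 28 ^ s * (8 ^ s / ρ ^ s / (2 ^ s - 1)) := by gcongr
    _ = porosityDecayConst s a b / ρ ^ s := by
        rw [porosityDecayConst, show (224 : ℝ) = 28 * 8 by norm_num,
          Real.mul_rpow (by norm_num) (by norm_num)]
        ring

theorem sum_mul_measure_le_of_pairwiseDisjoint {X ι : Type*} [MeasurableSpace X]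
    {μ : Measure X} {S : Finset ι} {T : Finset ℕ} {H : ι → Set X} {D : ℕ → Set X}
    {lvl : ι → ℕ} (w : ℕ → ℝ≥0∞)
    (hH : ∀ p ∈ S, MeasurableSet (H p)) (hdisj : (S : Set ι).PairwiseDisjoint H)
    (hlvl : ∀ p ∈ S, lvl p ∈ T) (hHD : ∀ p ∈ S, H p ⊆ D (lvl p)) :
    ∑ p ∈ S, w (lvl p) * μ (H p) ≤ ∑ j ∈ T, w j * μ (D j) := by
  rw [← Finset.sum_fiberwise_of_maps_to hlvl]
  refine Finset.sum_le_sum fun j _ => ?_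
  calc ∑ p ∈ S with lvl p = j, w (lvl p) * μ (H p)
      = w j * μ (⋃ p ∈ S.filter (lvl · = j), H p) := by
        rw [measure_biUnion_finset (hdisj.subset (Finset.coe_subset.2 (Finset.filter_subset _ _)))
          fun p hp => hH p (Finset.mem_filter.1 hp).1, Finset.mul_sum]
        exact Finset.sum_congr rfl fun p hp => by rw [(Finset.mem_filter.1 hp).2]
    _ ≤ w j * μ (D j) := by
        gcongr
        exact iUnion₂_subset fun p hp =>
          (Finset.mem_filter.1 hp).2 ▸ hHD p (Finset.mem_filter.1 hp).1

section Geometry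

variable {X : Type*} [MetricSpace X]

theorem cthickening_subset_closedBall_add {E : Set X} {x : X} {R δ : ℝ} (hE : E ⊆ closedBall x R)
    (hR : 0 ≤ R) (hδ : 0 ≤ δ) : cthickening δ E ⊆ closedBall x (δ + R) := by
  rw [← cthickening_singleton x hR] at hE
  rw [← cthickening_singleton x (add_nonneg hδ hR)]
  exact (cthickening_subset_of_subset δ hE).trans (cthickening_cthickening_subset hδ hR _)

theorem closedBall_subset_thickening_diff_thickening {E : Set X} {y : X} {u δ : ℝ}
    (hE : E.Nonempty) (hy : infDist y E = 2 * u) (hδ : 3 * u < δ) :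
    closedBall y u ⊆ thickening δ E \ thickening u E := by
  intro z hz
  rw [mem_closedBall] at hz
  have h₁ := infDist_le_infDist_add_dist (x := z) (y := y) (s := E)
  have h₂ := infDist_le_infDist_add_dist (x := y) (y := z) (s := E)
  rw [dist_comm] at h₂
  rw [Set.mem_sdiff, mem_thickening_iff_infDist_lt hE, mem_thickening_iff_infDist_lt hE]
  constructor <;> linarith

theorem UniformlyPorousWith.exists_le_infDist {A : Set X} {ρ rp t : ℝ}
    (hA : UniformlyPorousWith A ρ rp) (hρ : 0 < ρ) {x : X} (hx : x ∈ A) (ht : 0 < t)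
    (htp : t < rp) : ∃ y, dist x y ≤ t ∧ ρ * t / 2 ≤ infDist y A := by
  have hpor := hA x hx t ht htp
  have hne : {ρ' : ℝ | 0 ≤ ρ' ∧ ∃ y : X, closedBall y (ρ' * t) ∩ A = ∅ ∧
      ρ' * t + dist x y ≤ t}.Nonempty := by
    by_contra h
    rw [not_nonempty_iff_eq_empty] at h
    rw [por, h, Real.sSup_empty] at hpor
    linarith
  obtain ⟨ρ', ⟨hρ'0, y, hhole, hy⟩, hρρ'⟩ :=
    exists_lt_of_lt_csSup hne ((half_lt_self hρ).trans_le hpor)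
  have hfar : ρ' * t ≤ infDist y A := by
    refine (le_infDist ⟨x, hx⟩).2 fun z hz => le_of_not_gt fun hlt => ?_
    exact (eq_empty_iff_forall_notMem.1 hhole) z ⟨mem_closedBall'.2 hlt.le, hz⟩
  refine ⟨y, by nlinarith, le_trans ?_ hfar⟩
  rw [div_le_iff₀ two_pos]
  nlinarith

theorem UniformlyPorousWith.exists_closedBall_subset_shell {A E : Set X} {ρ rp t : ℝ} {m : ℕ}
    (hA : UniformlyPorousWith A ρ rp) (hρ : 0 < ρ) (hm : 4 / ρ ≤ 2 ^ m) (hEA : E ⊆ A) {p : X}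
    (hp : p ∈ E) (ht : 0 < t) (htp : t < rp) :
    ∃ y u j, j < m ∧ u ≤ t ∧ t < 2 ^ (j + 2) * u ∧ closedBall y u ⊆ closedBall p (2 * t) ∧
      closedBall y u ⊆ cthickening (2 * t / 2 ^ j) E \ cthickening (t / 2 ^ (j + 2)) E := by
  obtain ⟨y, hpy, hyA⟩ := hA.exists_le_infDist hρ (hEA hp) ht htp
  set u := infDist y E / 2 with hu
  have hyE : ρ * t / 2 ≤ infDist y E := hyA.trans (infDist_le_infDist_of_subset hEA ⟨p, hp⟩)
  have hyt : infDist y E ≤ t := (infDist_le_dist_of_mem hp).trans (dist_comm p y ▸ hpy)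
  have hu0 : 0 < u := by rw [hu]; nlinarith
  obtain ⟨j, hj₁, hj₂⟩ := exists_nat_pow_near (x := t / (2 * u)) (y := 2)
    (by rw [le_div_iff₀ (by positivity)]; linarith) one_lt_two
  rw [le_div_iff₀ (by positivity)] at hj₁
  rw [div_lt_iff₀ (by positivity)] at hj₂
  have hjm : j < m := by
    have hjρ : 2 ^ j * ρ ≤ 2 := by
      have : 2 ^ j * ρ * t ≤ 2 * t := by
        nlinarith [mul_le_mul_of_nonneg_left hyE (pow_pos (two_pos (α := ℝ)) j).le]
      exact le_of_mul_le_mul_right this ht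
    have : (2 : ℝ) ^ j < 2 ^ m := by
      rw [div_le_iff₀ hρ] at hm
      by_contra! h
      nlinarith [mul_le_mul_of_nonneg_right h hρ.le]
    exact (pow_lt_pow_iff_right₀ one_lt_two).1 this
  have hlow : t < 2 ^ (j + 2) * u := by rw [pow_succ]; linarith
  refine ⟨y, u, j, hjm, by linarith, hlow, ?_, ?_⟩
  · exact closedBall_subset_closedBall' (by rw [dist_comm]; linarith)
  · refine (closedBall_subset_thickening_diff_thickening ⟨p, hp⟩ (by rw [hu]; ring)
      (by linarith : 3 * u < 4 * u)).trans (sdiff_subset_sdiff ?_ ?_)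
    · refine thickening_subset_cthickening_of_le ?_ E
      rw [le_div_iff₀ (by positivity)]
      linarith
    · refine cthickening_subset_thickening' hu0 ?_ E
      rw [div_lt_iff₀ (by positivity)]
      linarith

theorem lt_dist_of_isSeparated {ε : ℝ≥0} {S : Set X} (hS : IsSeparated ε S) {p q : X}
    (hp : p ∈ S) (hq : q ∈ S) (hpq : p ≠ q) : (ε : ℝ) < dist p q := by
  have : (ε : ℝ≥0∞) < edist p q := hS hp hq hpq
  rwa [edist_nndist, ENNReal.coe_lt_coe, ← NNReal.coe_lt_coe, coe_nndist] at this

end Geometry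

section RegularMeasure

variable {X : Type*} [MetricSpace X] [MeasurableSpace X] {μ : Measure X} {s a b rμ : ℝ}

theorem IsRegularOn.measure_closedBall_ne_top (hreg : IsRegularOn μ s univ a b rμ)
    {r : ℝ} (hr : 0 < r) (hrμ : r < rμ) (x : X) :
    μ (closedBall x r) ≠ ∞ :=
  ne_top_of_le_ne_top ENNReal.ofReal_ne_top (hreg x (mem_univ x) r hr hrμ).2

theorem IsRegularOn.measure_closedBall_le_mul (hreg : IsRegularOn μ s univ a b rμ)
    (ha : 0 < a) {R r : ℝ} (hR : 0 < R) (hRμ : R < rμ) (hr : 0 < r)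
    (hrμ : r < rμ) (x y : X) :
    μ (closedBall x R) ≤ ENNReal.ofReal (b / a * (R / r) ^ s) * μ (closedBall y r) := calc
  μ (closedBall x R) ≤ ENNReal.ofReal (b * R ^ s) := (hreg x (mem_univ x) R hR hRμ).2
  _ = ENNReal.ofReal (b / a * (R / r) ^ s) * ENNReal.ofReal (a * r ^ s) := by
    rw [← ENNReal.ofReal_mul' (by positivity), Real.div_rpow hR.le hr.le]
    congr 1
    field_simp
  _ ≤ ENNReal.ofReal (b / a * (R / r) ^ s) * μ (closedBall y r) := by
    gcongr
    exact (hreg y (mem_univ y) r hr hrμ).1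

theorem IsRegularOn.measure_cthickening_ne_top (hreg : IsRegularOn μ s univ a b rμ)
    {E : Set X} {x₀ : X} {R δ : ℝ} (hE : E ⊆ closedBall x₀ R) (hR : 0 < R) (hδ : 0 ≤ δ)
    (hδR : δ + R < rμ) :
    μ (cthickening δ E) ≠ ∞ :=
  measure_ne_top_of_subset (cthickening_subset_closedBall_add hE hR.le hδ)
    (hreg.measure_closedBall_ne_top (by positivity) hδR x₀)

theorem IsRegularOn.measure_cthickening_le_mul (hreg : IsRegularOn μ s univ a b rμ)
    (ha : 0 < a) {E : Set X} {x₀ : X} {R : ℝ} (hE : E ⊆ closedBall x₀ R) (hR : 0 < R)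
    (hRμ : 2 * R < rμ) :
    μ (cthickening R E) ≤ ENNReal.ofReal (b / a * 2 ^ s) * μ (closedBall x₀ R) := calc
  μ (cthickening R E) ≤ μ (closedBall x₀ (R + R)) :=
    measure_mono (cthickening_subset_closedBall_add hE hR.le hR.le)
  _ ≤ ENNReal.ofReal (b / a * ((R + R) / R) ^ s) * μ (closedBall x₀ R) :=
    hreg.measure_closedBall_le_mul ha (by positivity) (by linarith) hR (by linarith) x₀ x₀
  _ = ENNReal.ofReal (b / a * 2 ^ s) * μ (closedBall x₀ R) := by
    rw [← two_mul, mul_div_assoc, div_self hR.ne', mul_one]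

variable [BorelSpace X]

theorem IsRegularOn.packingNumber_ne_top (hreg : IsRegularOn μ s univ a b rμ)
    (ha : 0 < a) {E : Set X} {x₀ : X} {R : ℝ} {ε : ℝ≥0}
    (hE : E ⊆ closedBall x₀ R) (hR : 0 ≤ R) (hε : 0 < ε) (hRε : R + ε / 2 < rμ) :
    packingNumber ε E ≠ ⊤ := by
  set c := ENNReal.ofReal (a * ((ε : ℝ) / 2) ^ s)
  set M := μ (closedBall x₀ (R + ε / 2))
  have hε' : (0 : ℝ) < ε := hε
  have hc : c ≠ 0 := (ENNReal.ofReal_pos.2 (by positivity)).ne'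
  have hM : M ≠ ∞ := hreg.measure_closedBall_ne_top (by positivity) hRε x₀
  have hbound : ∀ C ⊆ E, IsSeparated ε C → (C.encard : ℝ≥0∞) * c ≤ M := by
    intro C hCE hC
    have hdisj : Pairwise (Function.onFun Disjoint fun p : C => closedBall (p : X) (ε / 2)) :=
      fun p q hpq => closedBall_disjoint_closedBall <| by
        linarith [lt_dist_of_isSeparated hC p.2 q.2 (Subtype.coe_injective.ne hpq)]
    calc (C.encard : ℝ≥0∞) * c = ∑' _p : C, c := (ENNReal.tsum_set_const C c).symm
      _ ≤ ∑' p : C, μ (closedBall (p : X) (ε / 2)) := ENNReal.tsum_le_tsum fun p =>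
          (hreg p (mem_univ _) _ (by positivity) (by linarith)).1
      _ ≤ μ (⋃ p : C, closedBall (p : X) (ε / 2)) :=
          tsum_meas_le_meas_iUnion_of_disjoint μ (fun _ => measurableSet_closedBall) hdisj
      _ ≤ M := measure_mono <| iUnion_subset fun p =>
          closedBall_subset_closedBall' (by linarith [mem_closedBall.1 (hE (hCE p.2))])
  obtain ⟨n, hn⟩ := ENNReal.exists_nat_gt (ENNReal.div_ne_top hM hc)
  rw [ENNReal.div_lt_iff (Or.inl hc) (Or.inr hM)] at hn
  intro htop
  obtain ⟨C, hC⟩ := lt_iSup_iff.1 (htop ▸ ENat.natCast_lt_top n : (n : ℕ∞) < packingNumber ε E)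
  obtain ⟨hCE, hC⟩ := lt_iSup_iff.1 hC
  obtain ⟨hCsep, hC⟩ := lt_iSup_iff.1 hC
  have : (n : ℝ≥0∞) * c ≤ C.encard * c := by
    gcongr
    simpa using (ENat.toENNReal_lt.2 hC).le
  exact (hn.trans_le this).not_ge (hbound C hCE hCsep)

theorem IsRegularOn.exists_finset_separated_cover (hreg : IsRegularOn μ s univ a b rμ)
    (ha : 0 < a) {E : Set X} {x₀ : X} {R ε : ℝ}
    (hE : E ⊆ closedBall x₀ R) (hR : 0 ≤ R) (hε : 0 < ε) (hRε : R + ε / 2 < rμ) :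
    ∃ S : Finset X, ↑S ⊆ E ∧ (S : Set X).Pairwise (fun p q => ε < dist p q) ∧
      E ⊆ ⋃ p ∈ S, closedBall p ε := by
  have hpack := hreg.packingNumber_ne_top ha hE hR (Real.toNNReal_pos.2 hε)
    (by rwa [Real.coe_toNNReal _ hε.le])
  have hfin : (maximalSeparatedSet ε.toNNReal E).Finite := by
    rw [← Set.encard_ne_top_iff, encard_maximalSeparatedSet hpack]
    exact hpack
  refine ⟨hfin.toFinset, by simpa using maximalSeparatedSet_subset, ?_, ?_⟩
  · intro p hp q hq hpq
    simpa [Real.coe_toNNReal _ hε.le] using lt_dist_of_isSeparated isSeparated_maximalSeparatedSet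
      (hfin.mem_toFinset.1 hp) (hfin.mem_toFinset.1 hq) hpq
  · simpa [Real.coe_toNNReal _ hε.le] using
      isCover_iff_subset_iUnion_closedBall.1 (isCover_maximalSeparatedSet hpack)

theorem IsRegularOn.measure_cthickening_le_sum_shells (hreg : IsRegularOn μ s univ a b rμ)
    (ha : 0 < a) (hb : 0 ≤ b) (hs : 0 ≤ s) {A E : Set X}
    {ρ rp R t : ℝ} {m : ℕ} {x₀ : X} (hA : UniformlyPorousWith A ρ rp) (hρ : 0 < ρ)
    (hm : 4 / ρ ≤ 2 ^ m) (hEA : E ⊆ A) (hE : E ⊆ closedBall x₀ R) (hR : 0 ≤ R) (ht : 0 < t)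
    (htp : t < rp) (htμ : 7 * t < rμ) (hRt : R + 5 * t / 2 < rμ) :
    μ (cthickening t E) ≤ ∑ j ∈ Finset.range m, ENNReal.ofReal (b / a * (7 * 2 ^ (j + 2)) ^ s) *
      μ (cthickening (2 * t / 2 ^ j) E \ cthickening (t / 2 ^ (j + 2)) E) := by
  obtain ⟨S, hSE, hSsep, hEcov⟩ :=
    hreg.exists_finset_separated_cover ha hE hR (by positivity : 0 < 5 * t) (by linarith)
  choose! y u j hjm hut htu hsub hshell using fun p (hp : p ∈ S) =>
    hA.exists_closedBall_subset_shell hρ hm hEA (hSE hp) ht htp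
  have hcover : cthickening t E ⊆ ⋃ p ∈ S, closedBall p (7 * t) := by
    refine (cthickening_subset_iUnion_closedBall_of_lt E (by positivity) (by linarith :
      t < 2 * t)).trans (iUnion₂_subset fun x hx => ?_)
    obtain ⟨p, hp, hxp⟩ := mem_iUnion₂.1 (hEcov hx)
    exact (closedBall_subset_closedBall' (by linarith [mem_closedBall.1 hxp])).trans
      (subset_biUnion_of_mem (u := fun p => closedBall p (7 * t)) hp)
  have hcompare : ∀ p ∈ S, μ (closedBall p (7 * t)) ≤
      ENNReal.ofReal (b / a * (7 * 2 ^ (j p + 2)) ^ s) * μ (closedBall (y p) (u p)) := by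
    intro p hp
    have hu : 0 < u p := pos_of_mul_pos_right (ht.trans (htu p hp)) (by positivity)
    refine (hreg.measure_closedBall_le_mul ha (by positivity) htμ hu (by linarith [hut p hp])
      p (y p)).trans ?_
    gcongr
    rw [div_le_iff₀ hu]
    linarith [htu p hp]
  have hdisj : (S : Set X).PairwiseDisjoint fun p => closedBall (y p) (u p) :=
    fun p hp q hq hpq => (closedBall_disjoint_closedBall (by linarith [hSsep hp hq hpq])).mono
      (hsub p hp) (hsub q hq)
  calc μ (cthickening t E) ≤ μ (⋃ p ∈ S, closedBall p (7 * t)) := measure_mono hcover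
    _ ≤ ∑ p ∈ S, μ (closedBall p (7 * t)) := measure_biUnion_finset_le S _
    _ ≤ ∑ p ∈ S, ENNReal.ofReal (b / a * (7 * 2 ^ (j p + 2)) ^ s) *
          μ (closedBall (y p) (u p)) := Finset.sum_le_sum hcompare
    _ ≤ _ := sum_mul_measure_le_of_pairwiseDisjoint _ (fun _ _ => measurableSet_closedBall) hdisj
          (fun p hp => Finset.mem_range.2 (hjm p hp)) hshell

theorem IsRegularOn.measureReal_cthickening_dyadic_le (hreg : IsRegularOn μ s univ a b rμ)
    (ha : 0 < a) (hb : 0 ≤ b) (hs : 0 ≤ s) {A E : Set X} {ρ rp r₀ : ℝ} {m : ℕ} {x₀ : X}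
    (hA : UniformlyPorousWith A ρ rp) (hρ : 0 < ρ) (hm : 4 / ρ ≤ 2 ^ m) (hEA : E ⊆ A)
    (hE : E ⊆ closedBall x₀ r₀) (hr₀ : 0 < r₀) (hr₀p : r₀ < rp) (hr₀μ : 4 * r₀ < rμ) (i : ℕ) :
    μ.real (cthickening (r₀ / 2 ^ (i + 1)) E) ≤ ∑ j ∈ Finset.range m,
      b / a * (7 * 2 ^ (j + 2)) ^ s * (μ.real (cthickening (r₀ / 2 ^ (i + j)) E) -
        μ.real (cthickening (r₀ / 2 ^ (i + j + 3)) E)) := by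
  have hanti : ∀ {k l : ℕ}, k ≤ l → r₀ / 2 ^ l ≤ r₀ / 2 ^ k := fun hkl =>
    div_le_div_of_nonneg_left hr₀.le (by positivity) (pow_le_pow_right₀ one_le_two hkl)
  have hdy : ∀ k, r₀ / 2 ^ k ≤ r₀ := fun k => by simpa using hanti (Nat.zero_le k)
  have ht : r₀ / 2 ^ (i + 1) ≤ r₀ / 2 := by simpa using hanti (Nat.le_add_left 1 i)
  have hfin : ∀ k, μ (cthickening (r₀ / 2 ^ k) E) ≠ ∞ := fun k =>
    hreg.measure_cthickening_ne_top hE hr₀ (by positivity) (by linarith [hdy k])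
  have hshell : ∀ j, μ (cthickening (r₀ / 2 ^ (i + j)) E \ cthickening (r₀ / 2 ^ (i + j + 3)) E) =
      ENNReal.ofReal (μ.real (cthickening (r₀ / 2 ^ (i + j)) E) -
        μ.real (cthickening (r₀ / 2 ^ (i + j + 3)) E)) := by
    intro j
    rw [← measureReal_sdiff (cthickening_mono (hanti (by omega)) E)
      isClosed_cthickening.measurableSet (hfin _), measureReal_def,
      ENNReal.ofReal_toReal (measure_ne_top_of_subset sdiff_subset (hfin _))]
  have hsub_nonneg : ∀ j, 0 ≤ μ.real (cthickening (r₀ / 2 ^ (i + j)) E) -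
      μ.real (cthickening (r₀ / 2 ^ (i + j + 3)) E) := fun j =>
    sub_nonneg.2 (measureReal_mono (cthickening_mono (hanti (by omega)) E) (hfin _))
  have hkey := hreg.measure_cthickening_le_sum_shells (t := r₀ / 2 ^ (i + 1)) ha hb hs hA hρ hm
    hEA hE hr₀.le (by positivity) (by linarith) (by linarith) (by linarith)
  refine ENNReal.toReal_le_of_le_ofReal
    (Finset.sum_nonneg fun j _ => mul_nonneg (by positivity) (hsub_nonneg j)) ?_
  rw [ENNReal.ofReal_sum_of_nonneg fun j _ => mul_nonneg (by positivity) (hsub_nonneg j)]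
  convert hkey using 2 with j
  rw [ENNReal.ofReal_mul (by positivity), ← hshell]
  congr 3
  · rw [pow_add, pow_succ]; field_simp
  · rw [div_div, ← pow_add]; ring_nf

theorem IsRegularOn.measureReal_cthickening_le_half_pow (hreg : IsRegularOn μ s univ a b rμ)
    (hs : 0 < s) (ha : 0 < a) (hb : 0 < b) {A E : Set X} {ρ rp r₀ : ℝ} {x₀ : X}
    (hA : UniformlyPorousWith A ρ rp) (hρ0 : 0 < ρ) (hρ1 : ρ ≤ 1) (hEA : E ⊆ A)
    (hE : E ⊆ closedBall x₀ r₀) (hr₀ : 0 < r₀) (hr₀p : r₀ < rp) (hr₀μ : 4 * r₀ < rμ) (N : ℕ) :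
    μ.real (cthickening (r₀ / 2 ^ N) E) ≤
      (1 / 2) ^ (N / ⌈2 * porosityDecayConst s a b / ρ ^ s⌉₊) * μ.real (cthickening r₀ E) := by
  obtain ⟨m, hm₁, hm₂⟩ : ∃ m : ℕ, 4 / ρ ≤ 2 ^ m ∧ (2 : ℝ) ^ m ≤ 8 / ρ := by
    obtain ⟨k, hk₁, hk₂⟩ := exists_nat_pow_near (x := 4 / ρ) (y := (2 : ℝ))
      (by rw [le_div_iff₀ hρ0]; linarith) one_lt_two
    exact ⟨k + 1, hk₂.le, by rw [pow_succ]; linarith [show 4 / ρ * 2 = 8 / ρ by ring]⟩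
  set V : ℕ → ℝ := fun n => μ.real (cthickening (r₀ / 2 ^ n) E)
  have hdy : ∀ k : ℕ, r₀ / 2 ^ k ≤ r₀ := fun k => div_le_self hr₀.le (one_le_pow₀ one_le_two)
  have hV : Antitone V := fun k l hkl => measureReal_mono
    (cthickening_mono (div_le_div_of_nonneg_left hr₀.le (by positivity)
      (pow_le_pow_right₀ one_le_two hkl)) E)
    (hreg.measure_cthickening_ne_top hE hr₀ (by positivity) (by linarith [hdy k]))
  have hsum := sum_range_le_of_le_sum_sub hV (fun n => measureReal_nonneg)
    (fun j => by positivity) (hreg.measureReal_cthickening_dyadic_le ha hb.le hs.le hA hρ0 hm₁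
      hEA hE hr₀ hr₀p hr₀μ)
  set n := ⌈2 * porosityDecayConst s a b / ρ ^ s⌉₊
  have hK := porosityDecayConst_pos hs ha hb
  have hPn : 2 * (((3 : ℕ) : ℝ) * ∑ j ∈ Finset.range m, b / a * (7 * 2 ^ (j + 2)) ^ s) ≤ n := calc
    _ ≤ 2 * (porosityDecayConst s a b / ρ ^ s) := by
      push_cast
      linarith [sum_shell_weights_le hs (by positivity : 0 ≤ b / a) hρ0 hm₂]
    _ ≤ n := by rw [← mul_div_assoc]; exact Nat.le_ceil _
  have hhalf := two_mul_le_of_sum_range_le hV (fun n => measureReal_nonneg) hsum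
    (Nat.ceil_pos.2 (by positivity)) hPn
  simpa [V] using le_half_pow_div_mul hV hhalf N

theorem IsRegularOn.measure_thickening_inter_closedBall_le (hreg : IsRegularOn μ s univ a b rμ)
    (hs : 0 < s) (ha : 0 < a) (hb : 0 < b) {A : Set X} {ρ rp r₀ r : ℝ} {x₀ : X}
    (hA : UniformlyPorousWith A ρ rp) (hρ0 : 0 < ρ) (hρ1 : ρ ≤ 1) (hr₀ : 0 < r₀)
    (hr₀p : r₀ < rp) (hr₀μ : 4 * r₀ < rμ) (hr : 0 < r) (hrr₀ : r < r₀) :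
    μ (thickening r (A ∩ closedBall x₀ r₀)) ≤
      ENNReal.ofReal (2 * (b / a * 2 ^ s) *
        (r / r₀) ^ (1 / (2 * porosityDecayConst s a b + 1) * ρ ^ s)) * μ (closedBall x₀ r₀) := by
  set E := A ∩ closedBall x₀ r₀
  set K := porosityDecayConst s a b
  set e := 1 / (2 * K + 1) * ρ ^ s
  have hK := porosityDecayConst_pos hs ha hb
  have hn : 0 < ⌈2 * K / ρ ^ s⌉₊ := Nat.ceil_pos.2 (by positivity)
  obtain ⟨N, hrN, hxN⟩ := exists_le_div_two_pow_and_half_pow_succ_le hr hrr₀.le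
  have hfin : ∀ δ, 0 ≤ δ → δ ≤ r₀ → μ (cthickening δ E) ≠ ∞ := fun δ hδ hδr₀ =>
    hreg.measure_cthickening_ne_top inter_subset_right hr₀ hδ (by linarith)
  have hdecay : μ.real (cthickening (r₀ / 2 ^ N) E) ≤
      2 * (r / r₀) ^ e * μ.real (cthickening r₀ E) := calc
    _ ≤ (1 / 2) ^ (N / ⌈2 * K / ρ ^ s⌉₊) * μ.real (cthickening r₀ E) :=
      hreg.measureReal_cthickening_le_half_pow hs ha hb hA hρ0 hρ1 inter_subset_left
        inter_subset_right hr₀ hr₀p hr₀μ N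
    _ ≤ 2 * (r / r₀) ^ e * μ.real (cthickening r₀ E) := by
      refine mul_le_mul_of_nonneg_right ((half_pow_div_le_two_mul_rpow hn hxN).trans
        (mul_le_mul_of_nonneg_left ?_ two_pos.le)) measureReal_nonneg
      exact Real.rpow_le_rpow_of_exponent_ge (by positivity) ((div_le_one hr₀).2 hrr₀.le)
        (one_div_mul_le_one_div_ceil hK (by positivity) (Real.rpow_le_one hρ0.le hρ1 hs.le))
  calc μ (thickening r E) ≤ μ (cthickening (r₀ / 2 ^ N) E) :=
        measure_mono ((thickening_subset_cthickening r E).trans (cthickening_mono hrN E))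
    _ = ENNReal.ofReal (μ.real (cthickening (r₀ / 2 ^ N) E)) :=
        (ENNReal.ofReal_toReal (hfin _ (by positivity)
          (div_le_self hr₀.le (one_le_pow₀ one_le_two)))).symm
    _ ≤ ENNReal.ofReal (2 * (r / r₀) ^ e) * μ (cthickening r₀ E) := by
        rw [← ENNReal.ofReal_toReal (hfin _ hr₀.le le_rfl), ← ENNReal.ofReal_mul (by positivity)]
        exact ENNReal.ofReal_le_ofReal hdecay
    _ ≤ ENNReal.ofReal (2 * (r / r₀) ^ e) *
          (ENNReal.ofReal (b / a * 2 ^ s) * μ (closedBall x₀ r₀)) := by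
        gcongr
        exact hreg.measure_cthickening_le_mul ha inter_subset_right hr₀ (by linarith)
    _ = _ := by rw [← mul_assoc, ← ENNReal.ofReal_mul (by positivity)]; ring_nf

end RegularMeasure

/-- If `μ` is `s`-regular on `X`, there are constants `D₁, C₄, c > 0`
depending only on `a_μ, b_μ, s` such that for any `x₀ ∈ X`, any uniformly `ρ`-porous
`A ⊆ X` (scale `r_p`, `0 < ρ ≤ 1`), and any `0 < r₀ < D₁ min{r_p, r_μ}`:
`μ((A ∩ B(x₀,r₀))(r)) ≤ C₄ μ(B(x₀,r₀)) (r/r₀)^{c ρ^s}` for all `0 < r < r₀`. -/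
theorem stmt12 (s a b : ℝ) (hs : 0 < s) (ha : 0 < a) (hab : a ≤ b) :
    ∃ D₁ C₄ c : ℝ, 0 < D₁ ∧ 0 < C₄ ∧ 0 < c ∧
      ∀ (X : Type*) [MetricSpace X] [TopologicalSpace.SeparableSpace X]
        [MeasurableSpace X] [BorelSpace X] (μ : Measure X) (rμ : ℝ), 0 < rμ →
        IsRegularOn μ s (Set.univ : Set X) a b rμ →
        ∀ (x₀ : X) (A : Set X) (ρ rp : ℝ),
          0 < ρ → ρ ≤ 1 → 0 < rp → UniformlyPorousWith A ρ rp →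
        ∀ r₀ : ℝ, 0 < r₀ → r₀ < D₁ * min rp rμ →
        ∀ r : ℝ, 0 < r → r < r₀ →
          μ (Metric.thickening r (A ∩ closedBall x₀ r₀)) ≤
            ENNReal.ofReal (C₄ * (r / r₀) ^ (c * ρ ^ s)) * μ (closedBall x₀ r₀) := by
  have hb : 0 < b := ha.trans_le hab
  have hK := porosityDecayConst_pos hs ha hb
  refine ⟨1 / 4, 2 * (b / a * 2 ^ s), 1 / (2 * porosityDecayConst s a b + 1), by norm_num,
    by positivity, by positivity, ?_⟩
  intro X _ _ _ _ μ rμ _ hreg x₀ A ρ rp hρ0 hρ1 _ hA r₀ hr₀ hr₀D r hr hrr₀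
  exact hreg.measure_thickening_inter_closedBall_le hs ha hb hA hρ0 hρ1 hr₀
    (by linarith [min_le_left rp rμ]) (by linarith [min_le_right rp rμ]) hr hrr₀
end

section
/- Let X be a separable metric space carrying a doubling measure μ, and let N ⊆ X be a set such that for every s > dim_P(X) and every x ∈ X∖N one has lim_{r↓0} μ(B(x,r))/r^s = ∞. Let 0 < λ < dim_P(X). If A ⊆ X∖N satisfies limsup_{r↓0} μ(A(r))/r^λ < ∞, then dim_P(A) ≤ dim_P(X) − λ, where dim_P denotes the packing dimension. -/
/-!
Every point of `A` eventually carries mass `μ(B(x,r)) ≥ r^s` for `s > dim_P X`, so `A` is a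
countable union of pieces on which this holds uniformly for `r < δ`. On such a piece `E`, the
balls of radius `r/2` around a maximal `r`-separated subset are disjoint and lie in `A(r)`, so
that subset has at most `μ(A(r)) / (r/2)^s ≲ r^(λ-s)` points; being also an `r`-cover of `E`,
it bounds `dim_M E` by `s - λ`. Letting `s ↓ dim_P X` gives the claim.
-/

open Metric MeasureTheory Set Filter
open scoped ENNReal NNReal Topology

/-- `covNum A lam r = inf {k * r^lam : A is covered by k closed balls of radius r}`,
with `inf ∅ = ∞`. -/
noncomputable def covNum {X : Type*} [MetricSpace X] (A : Set X) (lam r : ℝ) : ℝ≥0∞ :=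
  sInf {m : ℝ≥0∞ | ∃ (k : ℕ) (c : Fin k → X),
    A ⊆ ⋃ i, closedBall (c i) r ∧ m = (k : ℝ≥0∞) * ENNReal.ofReal (r ^ lam)}

/-- The upper Minkowski dimension: `inf {λ ≥ 0 : limsup_{r↓0} covNum A λ r < ∞}`
(`= ∞` if there is no such `λ`). -/
noncomputable def dimM {X : Type*} [MetricSpace X] (A : Set X) : ℝ≥0∞ :=
  ⨅ (l : ℝ≥0) (_ : Filter.limsup (fun r => covNum A (l : ℝ) r)
      (nhdsWithin (0 : ℝ) (Set.Ioi 0)) < ⊤), (l : ℝ≥0∞)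

/-- The packing dimension:
`inf {sup_i dimM (C i) : A ⊆ ⋃ i C i, each C i bounded}`. -/
noncomputable def dimP {X : Type*} [MetricSpace X] (A : Set X) : ℝ≥0∞ :=
  ⨅ (C : ℕ → Set X) (_ : A ⊆ ⋃ i, C i) (_ : ∀ i, Bornology.IsBounded (C i)),
    ⨆ i, dimM (C i)

section Covering

variable {X : Type*} [MetricSpace X]

lemma covNum_le_of_cover {A : Set X} {l r : ℝ} {k : ℕ} (c : Fin k → X)
    (h : A ⊆ ⋃ i, closedBall (c i) r) : covNum A l r ≤ k * ENNReal.ofReal (r ^ l) :=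
  sInf_le ⟨k, c, h, rfl⟩

lemma covNum_mono {A B : Set X} (h : A ⊆ B) (l r : ℝ) : covNum A l r ≤ covNum B l r :=
  sInf_le_sInf fun _ ⟨k, c, hB, hm⟩ => ⟨k, c, h.trans hB, hm⟩

lemma covNum_le_coveringNumber_mul (A : Set X) (l : ℝ) {r : ℝ} (hr : 0 < r) :
    covNum A l r ≤ coveringNumber r.toNNReal A * ENNReal.ofReal (r ^ l) := by
  by_cases htop : coveringNumber r.toNNReal A = ⊤
  · simp [htop, ENNReal.top_mul, Real.rpow_pos_of_pos hr]
  obtain ⟨C, -, hCfin, hCcov, hCcard⟩ := exists_set_encard_eq_coveringNumber htop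
  obtain ⟨k, c, hc, rfl⟩ := hCfin.fin_param
  have hk : (range c).encard = k := by
    rw [← image_univ, hc.encard_image, encard_univ, ENat.card_eq_coe_fintype_card,
      Fintype.card_fin]
  rw [← hCcard, hk]
  refine covNum_le_of_cover c ?_
  simpa [biUnion_range, Real.coe_toNNReal _ hr.le] using hCcov.subset_iUnion_closedBall

variable [MeasurableSpace X] [OpensMeasurableSpace X]

lemma Metric.IsSeparated.encard_mul_le_measure_cthickening (μ : Measure X) {E C : Set X}
    {ε : ℝ≥0} {b : ℝ≥0∞} (hC : IsSeparated ε C) (hCE : C ⊆ E)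
    (hb : ∀ x ∈ C, b ≤ μ (closedBall x (ε / 2))) :
    C.encard * b ≤ μ (cthickening (ε / 2) E) := by
  have hdisj : Pairwise (Function.onFun Disjoint fun x : C => closedBall (x : X) (ε / 2)) := by
    intro x y hxy
    refine closedBall_disjoint_closedBall ?_
    have : (ε : ℝ≥0∞) < edist (x : X) y := hC x.2 y.2 (Subtype.coe_injective.ne hxy)
    rw [edist_nndist, ENNReal.coe_lt_coe, ← NNReal.coe_lt_coe, coe_nndist] at this
    linarith
  calc C.encard * b = ∑' _ : C, b := (ENNReal.tsum_set_const C b).symm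
    _ ≤ ∑' x : C, μ (closedBall x (ε / 2)) := ENNReal.tsum_le_tsum fun x => hb x x.2
    _ ≤ μ (⋃ x : C, closedBall x (ε / 2)) :=
      tsum_meas_le_meas_iUnion_of_disjoint μ (fun _ => measurableSet_closedBall) hdisj
    _ ≤ μ (cthickening (ε / 2) E) :=
      measure_mono <| iUnion_subset fun x => closedBall_subset_cthickening (hCE x.2) _

lemma packingNumber_mul_le_measure_cthickening (μ : Measure X) {E : Set X} {ε : ℝ≥0}
    {b : ℝ≥0∞} (hb : ∀ x ∈ E, b ≤ μ (closedBall x (ε / 2))) :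
    packingNumber ε E * b ≤ μ (cthickening (ε / 2) E) := by
  simp only [packingNumber, ENat.toENNReal_iSup, ENNReal.iSup_mul, iSup_le_iff]
  exact fun C hCE hC =>
    hC.encard_mul_le_measure_cthickening μ hCE fun x hx => hb x (hCE hx)

lemma covNum_mul_le_measure_cthickening_mul (μ : Measure X) {E : Set X} (l : ℝ) {r : ℝ}
    (hr : 0 < r) {b : ℝ≥0∞} (hb : ∀ x ∈ E, b ≤ μ (closedBall x (r / 2))) :
    covNum E l r * b ≤ μ (cthickening (r / 2) E) * ENNReal.ofReal (r ^ l) := by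
  have hr' : ((r.toNNReal : ℝ≥0) : ℝ) = r := Real.coe_toNNReal r hr.le
  calc covNum E l r * b ≤ coveringNumber r.toNNReal E * ENNReal.ofReal (r ^ l) * b := by
        gcongr; exact covNum_le_coveringNumber_mul E l hr
    _ ≤ packingNumber r.toNNReal E * b * ENNReal.ofReal (r ^ l) := by
        rw [mul_right_comm]; gcongr; exact coveringNumber_le_packingNumber _ _
    _ ≤ μ (cthickening (r / 2) E) * ENNReal.ofReal (r ^ l) := by
        gcongr
        simpa only [hr'] using packingNumber_mul_le_measure_cthickening μ (ε := r.toNNReal)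
          (by simpa only [hr'] using hb)

end Covering

section Dimension

variable {X : Type*} [MetricSpace X]

lemma dimM_le_of_eventually_covNum_le {A : Set X} {l : ℝ≥0} {C : ℝ≥0∞} (hC : C ≠ ⊤)
    (h : ∀ᶠ r in 𝓝[>] (0 : ℝ), covNum A l r ≤ C) : dimM A ≤ l :=
  iInf₂_le l ((limsup_le_of_le (by isBoundedDefault) h).trans_lt hC.lt_top)

lemma dimM_mono {A B : Set X} (h : A ⊆ B) : dimM A ≤ dimM B :=
  iInf_mono fun l => iInf_mono' fun hl =>
    ⟨(limsup_le_limsup (Eventually.of_forall fun r => covNum_mono h l r)).trans_lt hl, le_rfl⟩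

lemma dimP_le_iSup_dimM {A : Set X} {C : ℕ → Set X} (hA : A ⊆ ⋃ i, C i)
    (hC : ∀ i, Bornology.IsBounded (C i)) : dimP A ≤ ⨆ i, dimM (C i) :=
  iInf_le_of_le C (iInf_le_of_le hA (iInf_le_of_le hC le_rfl))

lemma dimP_le_of_subset_iUnion {A : Set X} {S : ℕ → Set X} {a : ℝ≥0∞} (hA : A ⊆ ⋃ m, S m)
    (hS : ∀ m, dimM (S m) ≤ a) : dimP A ≤ a := by
  rcases isEmpty_or_nonempty X with hX | ⟨⟨x₀⟩⟩
  · exact (dimP_le_iSup_dimM hA fun m => (toFinite (S m)).isBounded).trans (iSup_le hS)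
  let C : ℕ → Set X := fun n => S n.unpair.1 ∩ closedBall x₀ n.unpair.2
  have hAC : A ⊆ ⋃ n, C n := by
    intro x hx
    obtain ⟨m, hm⟩ := mem_iUnion.1 (hA hx)
    obtain ⟨j, hj⟩ := mem_iUnion.1 (iUnion_closedBall_nat x₀ ▸ mem_univ x)
    exact mem_iUnion.2 ⟨Nat.pair m j, by simpa [C] using ⟨hm, hj⟩⟩
  calc dimP A ≤ ⨆ n, dimM (C n) :=
        dimP_le_iSup_dimM hAC fun n => isBounded_closedBall.subset inter_subset_right
    _ ≤ a := iSup_le fun n => (dimM_mono inter_subset_left).trans (hS _)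

end Dimension

section MassDistribution

variable {X : Type*} [MetricSpace X] [MeasurableSpace X] [OpensMeasurableSpace X]

lemma dimM_le_of_forall_measure_closedBall_ge (μ : Measure X) {E A : Set X} (hEA : E ⊆ A)
    {s lam δ : ℝ} (hls : lam ≤ s) (hδ : 0 < δ)
    (hball : ∀ x ∈ E, ∀ r ∈ Ioo 0 δ, ENNReal.ofReal (r ^ s) ≤ μ (closedBall x r))
    (hA : limsup (fun r : ℝ => μ (thickening r A) / ENNReal.ofReal (r ^ lam)) (𝓝[>] 0) < ⊤) :
    dimM E ≤ ENNReal.ofReal (s - lam) := by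
  obtain ⟨K, hLK, hK⟩ := exists_between hA
  have hl : ((s - lam).toNNReal : ℝ) = s - lam := Real.coe_toNNReal _ (sub_nonneg.2 hls)
  refine dimM_le_of_eventually_covNum_le (C := K * ENNReal.ofReal (2 ^ s))
    (ENNReal.mul_ne_top hK.ne ENNReal.ofReal_ne_top) ?_
  filter_upwards [eventually_lt_of_limsup_lt hLK, Ioo_mem_nhdsGT (by positivity : 0 < 2 * δ)]
    with r hrK ⟨hr, hrδ⟩
  have hthick : μ (cthickening (r / 2) E) ≤ K * ENNReal.ofReal (r ^ lam) := calc
    μ (cthickening (r / 2) E) ≤ μ (thickening r A) := measure_mono <|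
      (cthickening_subset_thickening' hr (by linarith) E).trans (thickening_subset_of_subset r hEA)
    _ ≤ K * ENNReal.ofReal (r ^ lam) := (ENNReal.div_le_iff
      (by simpa using Real.rpow_pos_of_pos hr lam) ENNReal.ofReal_ne_top).1 hrK.le
  have hcov := covNum_mul_le_measure_cthickening_mul μ (s - lam) hr
    (b := ENNReal.ofReal ((r / 2) ^ s))
    fun x hx => hball x hx (r / 2) ⟨by linarith, by linarith⟩
  have hpow : r ^ lam * r ^ (s - lam) = 2 ^ s * (r / 2) ^ s := by
    rw [← Real.rpow_add hr, ← Real.mul_rpow (by norm_num) (by positivity)]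
    ring_nf
  rw [hl, ← ENNReal.mul_le_mul_iff_left (by simpa using Real.rpow_pos_of_pos (half_pos hr) s)
    ENNReal.ofReal_ne_top]
  calc covNum E (s - lam) r * ENNReal.ofReal ((r / 2) ^ s)
      ≤ K * ENNReal.ofReal (r ^ lam) * ENNReal.ofReal (r ^ (s - lam)) := hcov.trans (by gcongr)
    _ = K * ENNReal.ofReal (2 ^ s) * ENNReal.ofReal ((r / 2) ^ s) := by
      rw [mul_assoc, mul_assoc, ← ENNReal.ofReal_mul (by positivity),
        ← ENNReal.ofReal_mul (by positivity), hpow]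

lemma dimP_le_of_tendsto_measure_closedBall_div (μ : Measure X) {A : Set X} {s lam : ℝ}
    (hls : lam ≤ s)
    (hball : ∀ x ∈ A, Tendsto (fun r : ℝ => μ (closedBall x r) / ENNReal.ofReal (r ^ s))
      (𝓝[>] 0) (𝓝 ⊤))
    (hA : limsup (fun r : ℝ => μ (thickening r A) / ENNReal.ofReal (r ^ lam)) (𝓝[>] 0) < ⊤) :
    dimP A ≤ ENNReal.ofReal (s - lam) := by
  let S : ℕ → Set X := fun m =>
    {x ∈ A | ∀ r ∈ Ioo 0 (1 / (m + 1 : ℝ)), ENNReal.ofReal (r ^ s) ≤ μ (closedBall x r)}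
  refine dimP_le_of_subset_iUnion (S := S) ?_ fun m =>
    dimM_le_of_forall_measure_closedBall_ge μ (sep_subset _ _) hls Nat.one_div_pos_of_nat
      (fun x hx => hx.2) hA
  intro x hx
  have hev : ∀ᶠ r in 𝓝[>] (0 : ℝ), ENNReal.ofReal (r ^ s) ≤ μ (closedBall x r) := by
    filter_upwards [(hball x hx).eventually (eventually_ge_nhds ENNReal.one_lt_top),
      self_mem_nhdsWithin] with r h1 hr
    rwa [ENNReal.le_div_iff_mul_le (Or.inl (by simpa using Real.rpow_pos_of_pos hr s))
      (Or.inl ENNReal.ofReal_ne_top), one_mul] at h1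
  obtain ⟨u, hu, hsub⟩ := mem_nhdsGT_iff_exists_Ioo_subset.1 hev
  obtain ⟨m, hm⟩ := exists_nat_one_div_lt (show (0 : ℝ) < u from hu)
  exact mem_iUnion.2 ⟨m, hx, fun r hr => hsub ⟨hr.1, hr.2.trans hm⟩⟩

end MassDistribution

theorem stmt14_general {X : Type*} [MetricSpace X]
    [MeasurableSpace X] [BorelSpace X] (μ : Measure X)
    (N : Set X)
    (hN : ∀ s : ℝ, dimP (Set.univ : Set X) < ENNReal.ofReal s →
      ∀ x ∈ Nᶜ,
        Filter.Tendsto (fun r : ℝ => μ (closedBall x r) / ENNReal.ofReal (r ^ s))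
          (nhdsWithin (0 : ℝ) (Set.Ioi 0)) (nhds ⊤))
    (lam : ℝ) (hlam0 : 0 < lam) (hlam : ENNReal.ofReal lam < dimP (Set.univ : Set X))
    (A : Set X) (hAN : A ⊆ Nᶜ)
    (hA : Filter.limsup
        (fun r : ℝ => μ (Metric.thickening r A) / ENNReal.ofReal (r ^ lam))
        (nhdsWithin (0 : ℝ) (Set.Ioi 0)) < ⊤) :
    dimP A ≤ dimP (Set.univ : Set X) - ENNReal.ofReal lam := by
  set D := dimP (Set.univ : Set X)
  rcases eq_or_ne D ⊤ with hD | hD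
  · simp [hD]
  have hlamD : lam < D.toReal := (ENNReal.ofReal_lt_iff_lt_toReal hlam0.le hD).1 hlam
  refine ENNReal.le_of_forall_pos_le_add fun ε hε _ => ?_
  have hDs : D < ENNReal.ofReal (D.toReal + ε) :=
    (ENNReal.lt_ofReal_iff_toReal_lt hD).2 (lt_add_of_pos_right _ hε)
  calc dimP A ≤ ENNReal.ofReal (D.toReal + ε - lam) :=
        dimP_le_of_tendsto_measure_closedBall_div μ (by linarith [ε.coe_nonneg])
          (fun x hx => hN _ hDs x (hAN hx)) hA
    _ = D - ENNReal.ofReal lam + ε := by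
        rw [add_sub_right_comm, ENNReal.ofReal_add (by linarith) ε.coe_nonneg,
          ENNReal.ofReal_sub _ hlam0.le, ENNReal.ofReal_toReal hD, ENNReal.ofReal_coe_nnreal]

/-- Let `μ` be doubling on a separable metric space `X` and let
`N ⊆ X` be such that for every `s > dim_P X` and `x ∈ X ∖ N`, `μ(B(x,r))/r^s → ∞` as
`r ↓ 0`. If `0 < λ < dim_P X` and `A ⊆ X ∖ N` satisfies
`limsup_{r↓0} μ(A(r))/r^λ < ∞`, then `dim_P A ≤ dim_P X − λ`. -/
theorem stmt14 {X : Type*} [MetricSpace X] [TopologicalSpace.SeparableSpace X]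
    [MeasurableSpace X] [BorelSpace X] (μ : Measure X) (cμ rμ : ℝ)
    (hc : 1 ≤ cμ) (hr : 0 < rμ) (hdoub : IsDoubling μ cμ rμ)
    (N : Set X)
    (hN : ∀ s : ℝ, dimP (Set.univ : Set X) < ENNReal.ofReal s →
      ∀ x ∈ Nᶜ,
        Filter.Tendsto (fun r : ℝ => μ (closedBall x r) / ENNReal.ofReal (r ^ s))
          (nhdsWithin (0 : ℝ) (Set.Ioi 0)) (nhds ⊤))
    (lam : ℝ) (hlam0 : 0 < lam) (hlam : ENNReal.ofReal lam < dimP (Set.univ : Set X))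
    (A : Set X) (hAN : A ⊆ Nᶜ)
    (hA : Filter.limsup
        (fun r : ℝ => μ (Metric.thickening r A) / ENNReal.ofReal (r ^ lam))
        (nhdsWithin (0 : ℝ) (Set.Ioi 0)) < ⊤) :
    dimP A ≤ dimP (Set.univ : Set X) - ENNReal.ofReal lam :=
  stmt14_general μ N hN lam hlam0 hlam A hAN hA
end

section
/- Let X be a complete separable metric space carrying a measure μ which is s-regular on X with constants a_μ, b_μ and scale r_μ, and let 0 < t < s. Then for every z ∈ X and every 0 < R < r_μ there exists a measure ν with support contained in B(z,2R) such that ν(B(z,2R)) = R^t and a_ν r^t ≤ ν(B(x,r)) ≤ b_ν r^t for all x in the support of ν and all 0 < r < R, where the constants a_ν > 0 and b_ν > 0 depend only on s, t, a_μ and b_μ. -/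
/-!
Choose `N` and `δ = N^{-1/t}` so small that, by `s`-regularity, every ball of radius `ρ / 4`
contains `N` points that are `4δρ` apart. Iterating this choice from `z` at the radii `R δ^k` gives
an `N`-ary tree of points; along each infinite word the vertices converge geometrically, which
defines a map `π` from `ℕ → Fin N` into `B(z, R/2)`. Let `ν` be `R^t` times the image under `π` of
the uniform product measure, so that a cylinder of length `k` has mass `R^t N^{-k} = (R δ^k)^t`.
A ball of radius `r` centred in the support contains a whole cylinder with `R δ^k ≈ δ r`, which
gives the lower bound. It meets only cylinders whose level-`k` vertices lie in `B(x, 3r/2)`, and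
these vertices are `3 R δ^k`-separated, so regularity of `μ` bounds their number by
`(b / a) (3r)^s / (R δ^k)^s`; this gives the upper bound.
-/

open Metric MeasureTheory Set Filter
open scoped ENNReal NNReal Topology

/-- The support of a measure: points all of whose neighbourhoods have positive measure. -/
def sptMeas {X : Type*} [MetricSpace X] [MeasurableSpace X] (ν : Measure X) : Set X :=
  {x : X | ∀ r : ℝ, 0 < r → 0 < ν (Metric.ball x r)}

lemma card_mul_le_measure_of_separated {X ι : Type*} [MetricSpace X] [MeasurableSpace X]
    [OpensMeasurableSpace X] {μ : Measure X} (W : Finset ι) (p : ι → X) {ρ : ℝ} {α : ℝ≥0∞}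
    {Z : Set X} (hsep : (W : Set ι).Pairwise fun i j => 2 * ρ < dist (p i) (p j))
    (hα : ∀ i ∈ W, α ≤ μ (closedBall (p i) ρ)) (hZ : ∀ i ∈ W, closedBall (p i) ρ ⊆ Z) :
    W.card * α ≤ μ Z :=
  calc W.card * α = ∑ _i ∈ W, α := by rw [Finset.sum_const, nsmul_eq_mul]
    _ ≤ ∑ i ∈ W, μ (closedBall (p i) ρ) := Finset.sum_le_sum hα
    _ = μ (⋃ i ∈ W, closedBall (p i) ρ) := by
      refine (measure_biUnion_finset (fun i hi j hj hij => ?_)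
        fun i _ => measurableSet_closedBall).symm
      exact closedBall_disjoint_closedBall (by linarith [hsep hi hj hij])
    _ ≤ μ Z := measure_mono (iUnion₂_subset hZ)

lemma sptMeas_subset_closedBall {X : Type*} [MetricSpace X] [MeasurableSpace X]
    {ν : Measure X} {z : X} {ρ : ℝ} (hν : ν (closedBall z ρ)ᶜ = 0) :
    sptMeas ν ⊆ closedBall z ρ := by
  intro x hx
  by_contra hxz
  have hρx : ρ < dist x z := not_le.mp hxz
  refine (hx _ (sub_pos.mpr hρx)).ne' (measure_mono_null (fun y hy => ?_) hν)
  have := dist_triangle_left x z y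
  rw [mem_ball] at hy
  rw [mem_compl_iff, mem_closedBall, not_le]
  linarith

lemma Set.exists_injective_fin_of_le_encard {α : Type*} {C : Set α} {N : ℕ}
    (h : (N : ℕ∞) ≤ C.encard) : ∃ p : Fin N → α, Function.Injective p ∧ ∀ i, p i ∈ C := by
  obtain ⟨t, htC, ht⟩ := exists_subset_encard_eq h
  have : Finite t := finite_of_encard_eq_coe ht
  have e : t ≃ Fin N := Finite.equivFinOfCardEq (by
    rw [Nat.card_coe_set_eq, ncard_def, ht, ENat.toNat_natCast])
  exact ⟨fun i => e.symm i, Subtype.val_injective.comp e.symm.injective, fun i => htC (e.symm i).2⟩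

/-- A maximal `ε`-separated subset of `closedBall x r` covers it by `ε`-balls, so by regularity it
has at least `a r^s / (b ε^s)` points. -/
lemma IsRegularOn.exists_separated_fin {X : Type*} [MetricSpace X] [MeasurableSpace X]
    {μ : Measure X} {s a b rμ : ℝ} (hreg : IsRegularOn μ s univ a b rμ) (hb : 0 < b)
    (x : X) {r ε : ℝ} (hr : 0 < r) (hrμ : r < rμ) (hε : 0 < ε) (hεμ : ε < rμ) {N : ℕ}
    (hN : N * (b * ε ^ s) ≤ a * r ^ s) :
    ∃ p : Fin N → X, (∀ i, p i ∈ closedBall x r) ∧ Pairwise fun i j => ε < dist (p i) (p j) := by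
  set ε' : ℝ≥0 := ⟨ε, hε.le⟩
  by_contra hno
  have hsmall : ∀ C ⊆ closedBall x r, IsSeparated (ε' : ℝ≥0∞) C → C.encard < N := by
    intro C hCA hC
    by_contra! hNC
    obtain ⟨p, hp_inj, hpC⟩ := Set.exists_injective_fin_of_le_encard hNC
    refine hno ⟨p, fun i => hCA (hpC i), fun i j hij => ?_⟩
    have : ε' < edist (p i) (p j) := hC (hpC i) (hpC j) (hp_inj.ne hij)
    rwa [edist_nndist, ENNReal.coe_lt_coe, ← NNReal.coe_lt_coe, coe_nndist] at this
  have htop : packingNumber ε' (closedBall x r) ≠ ⊤ :=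
    ne_top_of_le_ne_top (ENat.natCast_ne_top N)
      (iSup_le fun C => iSup_le fun hCA => iSup_le fun hC => (hsmall C hCA hC).le)
  set C := maximalSeparatedSet ε' (closedBall x r)
  have hCcard := hsmall C maximalSeparatedSet_subset isSeparated_maximalSeparatedSet
  have hCfin : C.Finite := finite_of_encard_le_coe hCcard.le
  have hcover : closedBall x r ⊆ ⋃ c ∈ hCfin.toFinset, closedBall c ε := by
    intro y hy
    obtain ⟨c, hc, hyc⟩ := isCover_maximalSeparatedSet htop hy
    exact mem_biUnion (hCfin.mem_toFinset.mpr hc) (edist_le_coe.mp hyc)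
  have hmeas : ENNReal.ofReal (a * r ^ s) ≤ hCfin.toFinset.card * ENNReal.ofReal (b * ε ^ s) :=
    calc ENNReal.ofReal (a * r ^ s) ≤ μ (closedBall x r) := (hreg x trivial r hr hrμ).1
      _ ≤ ∑ c ∈ hCfin.toFinset, μ (closedBall c ε) :=
        (measure_mono hcover).trans (measure_biUnion_finset_le _ _)
      _ ≤ ∑ _c ∈ hCfin.toFinset, ENNReal.ofReal (b * ε ^ s) :=
        Finset.sum_le_sum fun c _ => (hreg c trivial ε hε hεμ).2
      _ = hCfin.toFinset.card * ENNReal.ofReal (b * ε ^ s) := by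
        rw [Finset.sum_const, nsmul_eq_mul]
  rw [← ENNReal.ofReal_natCast, ← ENNReal.ofReal_mul (Nat.cast_nonneg _),
    ENNReal.ofReal_le_ofReal_iff (by positivity)] at hmeas
  have hcardN : hCfin.toFinset.card < N := by
    rwa [hCfin.encard_eq_coe_toFinset_card, Nat.cast_lt] at hCcard
  have : (hCfin.toFinset.card : ℝ) * (b * ε ^ s) < N * (b * ε ^ s) := by gcongr
  linarith

lemma IsRegularOn.exists_children {X : Type*} [MetricSpace X] [MeasurableSpace X]
    {μ : Measure X} {s a b rμ : ℝ} (hreg : IsRegularOn μ s univ a b rμ) (hb : 0 < b) {N : ℕ}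
    {δ : ℝ} (hδ0 : 0 < δ) (hδ : δ ≤ 1 / 8) (hN : N * (b * (16 * δ) ^ s) ≤ a) {R : ℝ}
    (hR : 0 < R) (hRμ : R < rμ) (k : ℕ) (x : X) :
    ∃ p : Fin N → X, (∀ i, dist (p i) x ≤ R * δ ^ k / 4) ∧
      ∀ i j, i ≠ j → 4 * (R * δ ^ (k + 1)) < dist (p i) (p j) := by
  have hscale : R * δ ^ k ≤ R := mul_le_of_le_one_right hR.le (pow_le_one₀ hδ0.le (by linarith))
  have hsep : 4 * (R * δ ^ (k + 1)) = 16 * δ * (R * δ ^ k / 4) := by ring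
  obtain ⟨p, hp_near, hp_sep⟩ := hreg.exists_separated_fin hb x (r := R * δ ^ k / 4)
    (ε := 4 * (R * δ ^ (k + 1))) (by positivity) (by linarith) (by positivity)
    (by rw [hsep]; nlinarith) (by
      rw [hsep, Real.mul_rpow (by positivity) (by positivity), ← mul_assoc, ← mul_assoc]
      exact mul_le_mul_of_nonneg_right (by linarith) (by positivity))
  exact ⟨p, hp_near, fun i j hij => hp_sep hij⟩

lemma exists_mul_pow_mem_Icc {R δ ε : ℝ} (hε : 0 < ε) (hεR : ε ≤ R) (hδ0 : 0 < δ) (hδ1 : δ < 1) :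
    ∃ k : ℕ, δ * ε ≤ R * δ ^ k ∧ R * δ ^ k ≤ ε := by
  have hR : 0 < R := hε.trans_le hεR
  obtain ⟨n, hlt, hle⟩ := exists_nat_pow_near_of_lt_one (div_pos hε hR)
    ((div_le_one hR).mpr hεR) hδ0 hδ1
  rw [lt_div_iff₀ hR] at hlt
  rw [div_le_iff₀ hR] at hle
  refine ⟨n + 1, ?_, by linarith⟩
  rw [pow_succ]
  nlinarith

def truncate {α : Type*} (k : ℕ) (ω : ℕ → α) : Fin k → α := fun j => ω j

lemma measurable_truncate {α : Type*} [MeasurableSpace α] (k : ℕ) :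
    Measurable (truncate (α := α) k) :=
  measurable_pi_lambda _ fun j => measurable_pi_apply (j : ℕ)

noncomputable def codeMeasure (N : ℕ) : Measure (ℕ → Fin N) :=
  Measure.infinitePi fun _ => ProbabilityTheory.uniformOn univ

instance (N : ℕ) [NeZero N] : IsProbabilityMeasure (codeMeasure N) := by
  unfold codeMeasure; infer_instance

lemma codeMeasure_truncate_preimage (N : ℕ) [NeZero N] (k : ℕ) (u : Fin k → Fin N) :
    codeMeasure N (truncate k ⁻¹' {u}) = ((N : ℝ≥0∞) ^ k)⁻¹ := by
  have hcyl : truncate k ⁻¹' {u} =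
      Set.pi (Finset.range k : Set ℕ) fun j => if h : j < k then {u ⟨j, h⟩} else univ := by
    ext ω
    simp only [truncate, mem_preimage, mem_singleton_iff, funext_iff, Fin.forall_iff,
      Set.mem_pi, Finset.coe_range]
    exact forall₂_congr fun j hj => by simp [hj]
  rw [hcyl, codeMeasure, Measure.infinitePi_pi, Finset.prod_range]
  · simp [ProbabilityTheory.uniformOn_univ, ENNReal.inv_pow]
  · exact fun _ _ => MeasurableSet.of_discrete

lemma ofReal_rpow_mul_inv_pow {R δ t : ℝ} {N : ℕ} (hR : 0 ≤ R) (hδ : 0 ≤ δ) (hN : 0 < N)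
    (hδN : δ ^ t = (N : ℝ)⁻¹) (k : ℕ) :
    ENNReal.ofReal (R ^ t) * ((N : ℝ≥0∞) ^ k)⁻¹ = ENNReal.ofReal ((R * δ ^ k) ^ t) := by
  have : (R * δ ^ k) ^ t = R ^ t * ((N : ℝ)⁻¹) ^ k := by
    rw [Real.mul_rpow hR (pow_nonneg hδ k), ← Real.rpow_natCast δ k, ← Real.rpow_mul hδ,
      mul_comm (k : ℝ) t, Real.rpow_mul hδ, hδN, Real.rpow_natCast]
  rw [this, ENNReal.ofReal_mul (by positivity), ENNReal.ofReal_pow (by positivity),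
    ENNReal.ofReal_inv_of_pos (by exact_mod_cast hN), ENNReal.ofReal_natCast, ENNReal.inv_pow]

section Tree

variable {X : Type*} {N : ℕ} (F : ℕ → X → Fin N → X) (z : X)

def treePoint : (k : ℕ) → (Fin k → Fin N) → X
  | 0, _ => z
  | k + 1, u => F k (treePoint k (Fin.init u)) (u (Fin.last k))

def treeCentre (ω : ℕ → Fin N) (k : ℕ) : X := treePoint F z k (truncate k ω)

variable {F z}

lemma measurable_treeCentre [MeasurableSpace X] (k : ℕ) :
    Measurable fun ω => treeCentre F z ω k :=
  (measurable_of_countable _).comp (measurable_truncate k)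

variable [MetricSpace X] {R δ : ℝ}

lemma measurable_of_tendsto_treeCentre [MeasurableSpace X] [BorelSpace X] {π : (ℕ → Fin N) → X}
    (hπ : ∀ ω, Tendsto (treeCentre F z ω) atTop (𝓝 (π ω))) : Measurable π :=
  measurable_of_tendsto_metrizable measurable_treeCentre (tendsto_pi_nhds.mpr hπ)

lemma dist_treeCentre_succ_le (hF_near : ∀ k x i, dist (F k x i) x ≤ R * δ ^ k / 4)
    (ω : ℕ → Fin N) (k : ℕ) :
    dist (treeCentre F z ω k) (treeCentre F z ω (k + 1)) ≤ R / 4 * δ ^ k := by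
  rw [dist_comm]
  exact (hF_near k _ _).trans_eq (by ring)

lemma cauchySeq_treeCentre (hF_near : ∀ k x i, dist (F k x i) x ≤ R * δ ^ k / 4) (hδ : δ < 1)
    (ω : ℕ → Fin N) : CauchySeq (treeCentre F z ω) :=
  cauchySeq_of_le_geometric δ (R / 4) hδ (dist_treeCentre_succ_le hF_near ω)

lemma dist_treeCentre_le_of_tendsto (hF_near : ∀ k x i, dist (F k x i) x ≤ R * δ ^ k / 4)
    (hR : 0 ≤ R) (hδ0 : 0 ≤ δ) (hδ : δ ≤ 1 / 2) {ω : ℕ → Fin N} {y : X}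
    (hy : Tendsto (treeCentre F z ω) atTop (𝓝 y)) (k : ℕ) :
    dist (treeCentre F z ω k) y ≤ R * δ ^ k / 2 := by
  refine (dist_le_of_le_geometric_of_tendsto δ (R / 4) (by linarith)
    (dist_treeCentre_succ_le hF_near ω) hy k).trans ?_
  rw [div_le_iff₀ (by linarith)]
  have : 0 ≤ R * δ ^ k := by positivity
  nlinarith

lemma le_dist_treePoint (hF_near : ∀ k x i, dist (F k x i) x ≤ R * δ ^ k / 4)
    (hF_sep : ∀ k x i j, i ≠ j → 4 * (R * δ ^ (k + 1)) < dist (F k x i) (F k x j))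
    (hR : 0 ≤ R) (hδ0 : 0 ≤ δ) (hδ : δ ≤ 1 / 2) :
    ∀ k (u v : Fin k → Fin N), u ≠ v →
      3 * (R * δ ^ k) ≤ dist (treePoint F z k u) (treePoint F z k v)
  | 0, u, v, huv => absurd (Subsingleton.elim u v) huv
  | k + 1, u, v, huv => by
    have hρ : 0 ≤ R * δ ^ (k + 1) := by positivity
    by_cases hinit : Fin.init u = Fin.init v
    · have hlast : u (Fin.last k) ≠ v (Fin.last k) := fun h =>
        huv (by rw [← Fin.snoc_init_self u, ← Fin.snoc_init_self v, hinit, h])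
      have := hF_sep k (treePoint F z k (Fin.init u)) _ _ hlast
      simp only [treePoint, hinit] at this ⊢
      linarith
    · have hparents := le_dist_treePoint hF_near hF_sep hR hδ0 hδ k _ _ hinit
      have hu := hF_near k (treePoint F z k (Fin.init u)) (u (Fin.last k))
      have hv := hF_near k (treePoint F z k (Fin.init v)) (v (Fin.last k))
      have := dist_triangle4 (treePoint F z k (Fin.init u)) (treePoint F z (k + 1) u)
        (treePoint F z (k + 1) v) (treePoint F z k (Fin.init v))
      simp only [treePoint] at this ⊢
      rw [dist_comm] at hu
      rw [pow_succ]
      have : 0 ≤ R * δ ^ k := by positivity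
      nlinarith

lemma preimage_closedBall_subset_iUnion_truncate {π : (ℕ → Fin N) → X}
    (hF_near : ∀ k x i, dist (F k x i) x ≤ R * δ ^ k / 4)
    (hπ : ∀ ω, Tendsto (treeCentre F z ω) atTop (𝓝 (π ω)))
    (hR : 0 ≤ R) (hδ0 : 0 ≤ δ) (hδ : δ ≤ 1 / 2) (x : X) (r : ℝ) (k : ℕ) :
    π ⁻¹' closedBall x r ⊆ ⋃ u ∈ Finset.univ.filter
      (fun u : Fin k → Fin N => dist (treePoint F z k u) x ≤ r + R * δ ^ k / 2),
      truncate k ⁻¹' {u} := by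
  intro ω hω
  refine mem_biUnion (x := truncate k ω) (Finset.mem_filter.mpr ⟨Finset.mem_univ _, ?_⟩) rfl
  have := dist_treeCentre_le_of_tendsto hF_near hR hδ0 hδ (hπ ω) k
  have := dist_triangle (treeCentre F z ω k) (π ω) x
  rw [mem_preimage, mem_closedBall] at hω
  exact (by linarith : dist (treeCentre F z ω k) x ≤ r + R * δ ^ k / 2)

end Tree

noncomputable def treeMeasure {X : Type*} [MeasurableSpace X] (N : ℕ) (π : (ℕ → Fin N) → X)
    (R t : ℝ) : Measure X :=
  ENNReal.ofReal (R ^ t) • (codeMeasure N).map π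

lemma treeMeasure_apply {X : Type*} [MeasurableSpace X] {N : ℕ} {π : (ℕ → Fin N) → X}
    {R t : ℝ} (hπ : Measurable π) {A : Set X} (hA : MeasurableSet A) :
    treeMeasure N π R t A = ENNReal.ofReal (R ^ t) * codeMeasure N (π ⁻¹' A) := by
  rw [treeMeasure, Measure.smul_apply, Measure.map_apply hπ hA, smul_eq_mul]

lemma treeMeasure_apply_of_forall_mem {X : Type*} [MeasurableSpace X] {N : ℕ} [NeZero N]
    {π : (ℕ → Fin N) → X} {R t : ℝ} (hπ : Measurable π) {A : Set X} (hA : MeasurableSet A)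
    (hπA : ∀ ω, π ω ∈ A) : treeMeasure N π R t A = ENNReal.ofReal (R ^ t) := by
  rw [treeMeasure_apply hπ hA, show π ⁻¹' A = univ from eq_univ_of_forall hπA, measure_univ,
    mul_one]

section TreeMeasure

variable {X : Type*} [MetricSpace X] [MeasurableSpace X] [BorelSpace X] {N : ℕ} [NeZero N]
  {F : ℕ → X → Fin N → X} {z : X} {R δ t : ℝ} {π : (ℕ → Fin N) → X}

lemma ofReal_le_treeMeasure_closedBall (hF_near : ∀ k x i, dist (F k x i) x ≤ R * δ ^ k / 4)
    (hπ : ∀ ω, Tendsto (treeCentre F z ω) atTop (𝓝 (π ω)))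
    (hR : 0 < R) (hδ0 : 0 < δ) (hδ : δ ≤ 1 / 2) (ht : 0 ≤ t) (hδN : δ ^ t = (N : ℝ)⁻¹) {x : X}
    (hx : x ∈ sptMeas (treeMeasure N π R t)) {r : ℝ} (hr : 0 < r) (hrR : r < 2 * R) :
    ENNReal.ofReal ((δ / 2) ^ t * r ^ t) ≤ treeMeasure N π R t (closedBall x r) := by
  have hπm := measurable_of_tendsto_treeCentre hπ
  have hdist := fun ω => dist_treeCentre_le_of_tendsto hF_near hR.le hδ0.le hδ (hπ ω)
  obtain ⟨ω, hω⟩ : (π ⁻¹' ball x (r / 4)).Nonempty := by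
    have := (hx (r / 4) (by positivity)).ne'
    rw [treeMeasure_apply hπm measurableSet_ball] at this
    exact nonempty_of_measure_ne_zero (right_ne_zero_of_mul this)
  obtain ⟨k, hk_ge, hk_le⟩ := exists_mul_pow_mem_Icc (R := R) (half_pos hr) (by linarith) hδ0
    (by linarith)
  have hcyl : truncate k ⁻¹' {truncate k ω} ⊆ π ⁻¹' closedBall x r := by
    intro ω' hω'
    have hcentre : treeCentre F z ω' k = treeCentre F z ω k := by
      simp only [treeCentre, mem_singleton_iff.mp hω']
    have h' := hdist ω' k
    have h := hdist ω k
    rw [hcentre, dist_comm] at h'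
    have := dist_triangle4 (π ω') (treeCentre F z ω k) (π ω) x
    rw [mem_preimage, mem_ball] at hω
    rw [mem_preimage, mem_closedBall]
    linarith
  calc ENNReal.ofReal ((δ / 2) ^ t * r ^ t)
      = ENNReal.ofReal ((δ * (r / 2)) ^ t) := by
        rw [← Real.mul_rpow (by positivity) hr.le]; ring_nf
    _ ≤ ENNReal.ofReal ((R * δ ^ k) ^ t) :=
        ENNReal.ofReal_le_ofReal (Real.rpow_le_rpow (by positivity) hk_ge ht)
    _ = ENNReal.ofReal (R ^ t) * codeMeasure N (truncate k ⁻¹' {truncate k ω}) := by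
        rw [codeMeasure_truncate_preimage,
          ofReal_rpow_mul_inv_pow hR.le hδ0.le (Nat.pos_of_neZero N) hδN]
    _ ≤ treeMeasure N π R t (closedBall x r) := by
        rw [treeMeasure_apply hπm measurableSet_closedBall]
        gcongr

variable {μ : Measure X} {s a b rμ : ℝ}

lemma treeMeasure_closedBall_le_of_lt (hF_near : ∀ k x i, dist (F k x i) x ≤ R * δ ^ k / 4)
    (hF_sep : ∀ k x i j, i ≠ j → 4 * (R * δ ^ (k + 1)) < dist (F k x i) (F k x j))
    (hπ : ∀ ω, Tendsto (treeCentre F z ω) atTop (𝓝 (π ω)))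
    (hreg : IsRegularOn μ s univ a b rμ) (ha : 0 < a) (hb : 0 < b) (hR : 0 < R) (hRμ : R < rμ)
    (hδ0 : 0 < δ) (hδ : δ ≤ 1 / 2) (hts : t ≤ s) (hδN : δ ^ t = (N : ℝ)⁻¹)
    (x : X) {r : ℝ} (hr : 0 < r) (h3r : 3 * r < R) :
    treeMeasure N π R t (closedBall x r) ≤ ENNReal.ofReal (b / a * 3 ^ s * δ ^ (t - s) * r ^ t) := by
  obtain ⟨k, hk_ge, hk_le⟩ := exists_mul_pow_mem_Icc (R := R) hr (by linarith) hδ0 (by linarith)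
  set ρ := R * δ ^ k with hρ_def
  have hρ : 0 < ρ := by positivity
  set W := Finset.univ.filter fun u : Fin k → Fin N => dist (treePoint F z k u) x ≤ r + ρ / 2
  have hcount : (W.card : ℝ) * (a * ρ ^ s) ≤ b * (3 * r) ^ s := by
    have hsep : (W : Set (Fin k → Fin N)).Pairwise
        fun u v => 2 * ρ < dist (treePoint F z k u) (treePoint F z k v) := fun u _ v _ huv => by
      linarith [le_dist_treePoint (z := z) hF_near hF_sep hR.le hδ0.le hδ k u v huv]
    have hball : ∀ u ∈ W, closedBall (treePoint F z k u) ρ ⊆ closedBall x (3 * r) := by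
      intro u hu
      refine closedBall_subset_closedBall' ?_
      linarith [(Finset.mem_filter.mp hu).2]
    have := (card_mul_le_measure_of_separated W _ hsep
      (fun u _ => (hreg _ trivial ρ hρ (by linarith)).1) hball).trans
      (hreg x trivial (3 * r) (by positivity) (by linarith)).2
    rwa [← ENNReal.ofReal_natCast, ← ENNReal.ofReal_mul (Nat.cast_nonneg _),
      ENNReal.ofReal_le_ofReal_iff (by positivity)] at this
  have hmeas : codeMeasure N (π ⁻¹' closedBall x r) ≤ W.card * ((N : ℝ≥0∞) ^ k)⁻¹ :=
    calc codeMeasure N (π ⁻¹' closedBall x r)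
        ≤ ∑ u ∈ W, codeMeasure N (truncate k ⁻¹' {u}) :=
          (measure_mono (preimage_closedBall_subset_iUnion_truncate hF_near hπ hR.le hδ0.le hδ
            x r k)).trans (measure_biUnion_finset_le _ _)
      _ = W.card * ((N : ℝ≥0∞) ^ k)⁻¹ := by
          simp only [codeMeasure_truncate_preimage, Finset.sum_const, nsmul_eq_mul]
  have hreal : (W.card : ℝ) * ρ ^ t ≤ b / a * 3 ^ s * δ ^ (t - s) * r ^ t :=
    calc (W.card : ℝ) * ρ ^ t = (W.card * ρ ^ s) * ρ ^ (t - s) := by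
          rw [mul_assoc, ← Real.rpow_add hρ, add_sub_cancel]
      _ ≤ (b / a * (3 * r) ^ s) * (δ * r) ^ (t - s) := by
          gcongr ?_ * ?_
          · rw [div_mul_eq_mul_div, le_div_iff₀ ha]
            linear_combination hcount
          · exact Real.rpow_le_rpow_of_nonpos (by positivity) hk_ge (by linarith)
      _ = b / a * 3 ^ s * δ ^ (t - s) * r ^ t := by
          rw [Real.mul_rpow (by norm_num) hr.le, Real.mul_rpow hδ0.le hr.le,
            show r ^ t = r ^ s * r ^ (t - s) by rw [← Real.rpow_add hr, add_sub_cancel]]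
          ring
  calc treeMeasure N π R t (closedBall x r)
      = ENNReal.ofReal (R ^ t) * codeMeasure N (π ⁻¹' closedBall x r) :=
        treeMeasure_apply (measurable_of_tendsto_treeCentre hπ) measurableSet_closedBall
    _ ≤ ENNReal.ofReal (R ^ t) * (W.card * ((N : ℝ≥0∞) ^ k)⁻¹) := by gcongr
    _ = ENNReal.ofReal (W.card * ρ ^ t) := by
        rw [mul_left_comm, ofReal_rpow_mul_inv_pow hR.le hδ0.le (Nat.pos_of_neZero N) hδN,
          ENNReal.ofReal_mul (Nat.cast_nonneg _), ENNReal.ofReal_natCast]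
    _ ≤ ENNReal.ofReal (b / a * 3 ^ s * δ ^ (t - s) * r ^ t) := ENNReal.ofReal_le_ofReal hreal

lemma treeMeasure_closedBall_le (hF_near : ∀ k x i, dist (F k x i) x ≤ R * δ ^ k / 4)
    (hF_sep : ∀ k x i j, i ≠ j → 4 * (R * δ ^ (k + 1)) < dist (F k x i) (F k x j))
    (hπ : ∀ ω, Tendsto (treeCentre F z ω) atTop (𝓝 (π ω)))
    (hreg : IsRegularOn μ s univ a b rμ) (ha : 0 < a) (hb : 0 < b) (hR : 0 < R) (hRμ : R < rμ)
    (hδ0 : 0 < δ) (hδ : δ ≤ 1 / 2) (ht : 0 ≤ t) (hts : t ≤ s) (hδN : δ ^ t = (N : ℝ)⁻¹)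
    (x : X) {r : ℝ} (hr : 0 < r) :
    treeMeasure N π R t (closedBall x r) ≤
      ENNReal.ofReal ((b / a * 3 ^ s * δ ^ (t - s) + 3 ^ t) * r ^ t) := by
  have hsplit := add_mul (b / a * 3 ^ s * δ ^ (t - s)) (3 ^ t) (r ^ t)
  have h3 : 0 ≤ (3 : ℝ) ^ t * r ^ t := by positivity
  have h3s : 0 ≤ b / a * 3 ^ s * δ ^ (t - s) * r ^ t := by positivity
  rcases lt_or_ge (3 * r) R with h3r | h3r
  · refine (treeMeasure_closedBall_le_of_lt hF_near hF_sep hπ hreg ha hb hR hRμ hδ0 hδ hts hδN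
      x hr h3r).trans (ENNReal.ofReal_le_ofReal ?_)
    linarith
  · have hRt : R ^ t ≤ 3 ^ t * r ^ t := by
      rw [← Real.mul_rpow (by norm_num) hr.le]
      exact Real.rpow_le_rpow hR.le h3r ht
    calc treeMeasure N π R t (closedBall x r) ≤ treeMeasure N π R t univ :=
          measure_mono (subset_univ _)
      _ = ENNReal.ofReal (R ^ t) :=
          treeMeasure_apply_of_forall_mem (measurable_of_tendsto_treeCentre hπ) .univ
            fun _ => trivial
      _ ≤ ENNReal.ofReal ((b / a * 3 ^ s * δ ^ (t - s) + 3 ^ t) * r ^ t) :=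
          ENNReal.ofReal_le_ofReal (by linarith)

end TreeMeasure

theorem exists_regular_treeMeasure {X : Type*} [MetricSpace X] [CompleteSpace X]
    [MeasurableSpace X] [BorelSpace X] {μ : Measure X} {s t a b rμ : ℝ}
    (hreg : IsRegularOn μ s univ a b rμ) (ha : 0 < a) (hb : 0 < b) (ht : 0 < t) (hts : t ≤ s)
    {N : ℕ} [NeZero N] {δ : ℝ} (hδ0 : 0 < δ) (hδ : δ ≤ 1 / 8) (hδN : δ ^ t = (N : ℝ)⁻¹)
    (hN : N * (b * (16 * δ) ^ s) ≤ a) (z : X) {R : ℝ} (hR : 0 < R) (hRμ : R < rμ) :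
    ∃ ν : Measure X, sptMeas ν ⊆ closedBall z (2 * R) ∧
      ν (closedBall z (2 * R)) = ENNReal.ofReal (R ^ t) ∧
      ∀ x ∈ sptMeas ν, ∀ r : ℝ, 0 < r → r < R →
        ENNReal.ofReal ((δ / 2) ^ t * r ^ t) ≤ ν (closedBall x r) ∧
          ν (closedBall x r) ≤ ENNReal.ofReal ((b / a * 3 ^ s * δ ^ (t - s) + 3 ^ t) * r ^ t) := by
  have hδ2 : δ ≤ 1 / 2 := by linarith
  choose F hF_near hF_sep using hreg.exists_children hb hδ0 hδ hN hR hRμ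
  choose π hπ using fun ω => cauchySeq_tendsto_of_complete
    (cauchySeq_treeCentre (z := z) hF_near (by linarith : δ < 1) ω)
  have hπm := measurable_of_tendsto_treeCentre hπ
  have hπz : ∀ ω, π ω ∈ closedBall z (2 * R) := fun ω => by
    have := dist_treeCentre_le_of_tendsto hF_near hR.le hδ0.le hδ2 (hπ ω) 0
    rw [pow_zero, mul_one] at this
    rw [mem_closedBall, dist_comm]
    exact this.trans (by linarith)
  refine ⟨treeMeasure N π R t, sptMeas_subset_closedBall ?_,
    treeMeasure_apply_of_forall_mem hπm measurableSet_closedBall hπz,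
    fun x hx r hr hrR => ⟨?_, ?_⟩⟩
  · rw [treeMeasure_apply hπm measurableSet_closedBall.compl, preimage_compl,
      show π ⁻¹' closedBall z (2 * R) = univ from eq_univ_of_forall hπz, compl_univ,
      measure_empty, mul_zero]
  · exact ofReal_le_treeMeasure_closedBall hF_near hπ hR hδ0 hδ2 ht.le hδN hx hr (by linarith)
  · exact treeMeasure_closedBall_le hF_near hF_sep hπ hreg ha hb hR hRμ hδ0 hδ2 ht.le hts hδN x hr

lemma exists_branching_and_ratio {s t a b : ℝ} (ht : 0 < t) (hts : t < s) (ha : 0 < a) :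
    ∃ N : ℕ, 0 < N ∧ ∃ δ : ℝ, 0 < δ ∧ δ ≤ 1 / 8 ∧ δ ^ t = (N : ℝ)⁻¹ ∧
      N * (b * (16 * δ) ^ s) ≤ a := by
  set δ : ℕ → ℝ := fun N => (N : ℝ) ^ (-t⁻¹)
  have hδ_lim : Tendsto δ atTop (𝓝 0) :=
    (tendsto_rpow_neg_atTop (inv_pos.mpr ht)).comp tendsto_natCast_atTop_atTop
  have hgain : Tendsto (fun N => b * 16 ^ s * δ N ^ (s - t)) atTop (𝓝 0) := by
    have := ((Real.continuousAt_rpow_const 0 (s - t) (Or.inr (by linarith))).tendsto.comp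
      hδ_lim).const_mul (b * 16 ^ s)
    simpa [Real.zero_rpow (by linarith : s - t ≠ 0)] using this
  obtain ⟨N, hN1, hδ8, hgainN⟩ := ((eventually_ge_atTop 1).and
    ((hδ_lim.eventually (ge_mem_nhds (by norm_num : (0 : ℝ) < 1 / 8))).and
      (hgain.eventually (ge_mem_nhds ha)))).exists
  have hN0 : (0 : ℝ) < N := by exact_mod_cast hN1
  have hδ0 : 0 < δ N := by positivity
  have hδN : δ N ^ t = (N : ℝ)⁻¹ := by
    rw [← Real.rpow_mul hN0.le, neg_mul, inv_mul_cancel₀ ht.ne', Real.rpow_neg_one]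
  refine ⟨N, hN1, δ N, hδ0, hδ8, hδN, ?_⟩
  calc N * (b * (16 * δ N) ^ s) = b * 16 ^ s * (δ N ^ s / δ N ^ t) := by
        rw [hδN, Real.mul_rpow (by norm_num) hδ0.le, div_inv_eq_mul]; ring
    _ = b * 16 ^ s * δ N ^ (s - t) := by rw [Real.rpow_sub hδ0]
    _ ≤ a := hgainN

/-- If `X` is complete, separable and `μ` is `s`-regular on `X`, and
`0 < t < s`, then for every `z ∈ X` and `0 < R < r_μ` there is a measure `ν` supported in
`B(z,2R)` with `ν(B(z,2R)) = R^t` and `a_ν r^t ≤ ν(B(x,r)) ≤ b_ν r^t` for all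
`x ∈ spt ν` and `0 < r < R`, where `a_ν, b_ν > 0` depend only on `s, t, a_μ, b_μ`. -/
theorem stmt15 (s t a b : ℝ) (ht : 0 < t) (hts : t < s) (ha : 0 < a) (hab : a ≤ b) :
    ∃ aν bν : ℝ, 0 < aν ∧ 0 < bν ∧
      ∀ (X : Type*) [MetricSpace X] [TopologicalSpace.SeparableSpace X] [CompleteSpace X]
        [MeasurableSpace X] [BorelSpace X] (μ : Measure X) (rμ : ℝ), 0 < rμ →
        IsRegularOn μ s (Set.univ : Set X) a b rμ →
        ∀ (z : X) (R : ℝ), 0 < R → R < rμ →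
          ∃ ν : Measure X,
            sptMeas ν ⊆ closedBall z (2 * R) ∧
            ν (closedBall z (2 * R)) = ENNReal.ofReal (R ^ t) ∧
            ∀ x ∈ sptMeas ν, ∀ r : ℝ, 0 < r → r < R →
              ENNReal.ofReal (aν * r ^ t) ≤ ν (closedBall x r) ∧
                ν (closedBall x r) ≤ ENNReal.ofReal (bν * r ^ t) := by
  obtain ⟨N, hN, δ, hδ0, hδ, hδN, hNδ⟩ := exists_branching_and_ratio (b := b) ht hts ha
  have : NeZero N := ⟨hN.ne'⟩
  have hb : 0 < b := ha.trans_le hab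
  refine ⟨(δ / 2) ^ t, b / a * 3 ^ s * δ ^ (t - s) + 3 ^ t, by positivity, by positivity, ?_⟩
  intro X _ _ _ _ _ μ rμ _ hreg z R hR hRμ
  exact exists_regular_treeMeasure hreg ha hb ht hts.le hδ0 hδ hδN hNδ z hR hRμ
end

section
/- Let X be a nonempty complete separable metric space carrying a measure μ which is s-regular on X. Then for every 0 < t < s there exists a nonempty t-regular set F ⊆ X. -/
open Metric MeasureTheory Set Filter
open scoped ENNReal NNReal Topology

/-- A set `F` is `t`-regular if some measure `ν` is `t`-regular on `F`
(with some constants) and `ν(X ∖ F) = 0`. -/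
def IsRegularSet {X : Type*} [MetricSpace X] [MeasurableSpace X] (F : Set X) (t : ℝ) : Prop :=
  ∃ (ν : Measure X) (a b rν : ℝ), 0 < a ∧ a ≤ b ∧ 0 < rν ∧
    IsRegularOn ν t F a b rν ∧ ν Fᶜ = 0

namespace IsRegularOn

variable {X : Type*} [MetricSpace X] [MeasurableSpace X] {μ : Measure X} {s a b rμ : ℝ}

theorem exists_mem_closedBall_forall_lt_dist
    (hreg : IsRegularOn μ s univ a b rμ) (ha : 0 < a) (x : X) {R r : ℝ} (hR : 0 < R)
    (hRμ : R < rμ) (hr : 0 < r) (hrμ : r < rμ) {k : ℕ} (f : Fin k → X)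
    (hk : k * (b * r ^ s) < a * R ^ s) :
    ∃ z ∈ closedBall x R, ∀ i, r < dist z (f i) := by
  by_contra! hcover
  have hsub : closedBall x R ⊆ ⋃ i, closedBall (f i) r := fun z hz ↦
    mem_iUnion.2 <| (hcover z hz).imp fun _ ↦ mem_closedBall.2
  have : ENNReal.ofReal (a * R ^ s) ≤ ENNReal.ofReal (k * (b * r ^ s)) :=
    calc ENNReal.ofReal (a * R ^ s) ≤ μ (closedBall x R) := (hreg x trivial R hR hRμ).1
      _ ≤ ∑ i, μ (closedBall (f i) r) := (measure_mono hsub).trans (measure_iUnion_fintype_le _ _)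
      _ ≤ ∑ _i : Fin k, ENNReal.ofReal (b * r ^ s) :=
        Finset.sum_le_sum fun i _ ↦ (hreg (f i) trivial r hr hrμ).2
      _ = ENNReal.ofReal (k * (b * r ^ s)) := by
        rw [Finset.sum_const, Finset.card_univ, Fintype.card_fin, nsmul_eq_mul,
          ENNReal.ofReal_mul (Nat.cast_nonneg k), ENNReal.ofReal_natCast]
  rw [ENNReal.ofReal_le_ofReal_iff'] at this
  have : 0 < a * R ^ s := by positivity
  grind

theorem exists_separated_in_closedBall
    (hreg : IsRegularOn μ s univ a b rμ) (ha : 0 < a) (x : X) {R r : ℝ} (hR : 0 < R)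
    (hRμ : R < rμ) (hr : 0 < r) (hrμ : r < rμ) {N : ℕ} (hN : N * (b * r ^ s) ≤ a * R ^ s) :
    ∃ f : Fin N → X, (∀ i, dist (f i) x ≤ R) ∧ Pairwise fun i j ↦ r < dist (f i) (f j) := by
  induction N with
  | zero => exact ⟨Fin.elim0, fun i ↦ i.elim0, fun i ↦ i.elim0⟩
  | succ k ih =>
    have hk : k * (b * r ^ s) < a * R ^ s := by
      have : 0 < a * R ^ s := by positivity
      push_cast at hN
      rcases le_or_gt (b * r ^ s) 0 with hc | hc <;> nlinarith
    obtain ⟨f, hfR, hfsep⟩ := ih hk.le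
    obtain ⟨z, hzR, hzf⟩ := hreg.exists_mem_closedBall_forall_lt_dist ha x hR hRμ hr hrμ f hk
    refine ⟨Fin.snoc f z, Fin.lastCases (by simpa using hzR) (by simpa using hfR), ?_⟩
    intro i j hij
    induction i using Fin.lastCases <;> induction j using Fin.lastCases
    · exact absurd rfl hij
    · simpa using hzf _
    · simpa [dist_comm] using hzf _
    · simpa using hfsep (Fin.castSucc_injective _ |>.ne_iff.1 hij)

theorem exists_separated_in_closedBall_of_ratio
    (hreg : IsRegularOn μ s univ a b rμ) (ha : 0 < a) (x : X) {R c : ℝ} (hR : 0 < R)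
    (hRμ : R < rμ) (hc : 0 < c) (hc1 : c ≤ 1) {N : ℕ} (hN : N * (b * c ^ s) ≤ a) :
    ∃ f : Fin N → X, (∀ i, dist (f i) x ≤ R) ∧ Pairwise fun i j ↦ c * R < dist (f i) (f j) := by
  refine hreg.exists_separated_in_closedBall ha x hR hRμ (by positivity)
    ((mul_le_of_le_one_left hR.le hc1).trans_lt hRμ) ?_
  rw [Real.mul_rpow hc.le hR.le]
  calc (N : ℝ) * (b * (c ^ s * R ^ s)) = N * (b * c ^ s) * R ^ s := by ring
    _ ≤ a * R ^ s := by gcongr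

end IsRegularOn

structure CantorScheme (X : Type*) [MetricSpace X] (N : ℕ) where
  root : X
  children : ℕ → X → Fin N → X
  scale : ℝ
  ratio : ℝ
  scale_nonneg : 0 ≤ scale
  ratio_nonneg : 0 ≤ ratio
  ratio_le_half : ratio ≤ 1 / 2
  dist_children_le : ∀ n x i, dist (children n x i) x ≤ scale * ratio ^ n
  -- Branches from a level-`(n+1)` node stay within `2 * scale * ratio ^ (n + 1)` of it, so the
  -- factor `8` keeps sibling subtrees `4 * scale * ratio ^ (n + 1)` apart.
  children_separated : ∀ n x, Pairwise fun i j ↦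
    8 * ratio * (scale * ratio ^ n) < dist (children n x i) (children n x j)

namespace CantorScheme

variable {X : Type*} [MetricSpace X] {N : ℕ} (C : CantorScheme X N)

def node (C : CantorScheme X N) : ℕ → (ℕ → Fin N) → X
  | 0, _ => C.root
  | n + 1, ω => C.children n (C.node n ω) (ω n)

theorem node_eq_of_mem_cylinder {ω ω' : ℕ → Fin N} {n : ℕ} (h : ω' ∈ PiNat.cylinder ω n) :
    C.node n ω' = C.node n ω := by
  induction n with
  | zero => rfl
  | succ n ih => rw [node, node, ih (PiNat.cylinder_anti ω n.le_succ h), h n n.lt_succ_self]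

theorem ratio_lt_one : C.ratio < 1 := C.ratio_le_half.trans_lt (by norm_num)

theorem dist_node_succ_le (ω : ℕ → Fin N) (n : ℕ) :
    dist (C.node n ω) (C.node (n + 1) ω) ≤ C.scale * C.ratio ^ n := by
  rw [dist_comm, node]
  exact C.dist_children_le _ _ _

noncomputable def point (ω : ℕ → Fin N) : X :=
  haveI : Nonempty X := ⟨C.root⟩
  limUnder atTop fun n ↦ C.node n ω

variable [CompleteSpace X]

theorem tendsto_node (ω : ℕ → Fin N) : Tendsto (C.node · ω) atTop (𝓝 (C.point ω)) :=
  (cauchySeq_of_le_geometric _ _ C.ratio_lt_one (C.dist_node_succ_le ω)).tendsto_limUnder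

theorem dist_node_point_le (ω : ℕ → Fin N) (n : ℕ) :
    dist (C.node n ω) (C.point ω) ≤ 2 * (C.scale * C.ratio ^ n) := by
  refine (dist_le_of_le_geometric_of_tendsto _ _ C.ratio_lt_one (C.dist_node_succ_le ω)
    (C.tendsto_node ω) n).trans ?_
  have : 0 ≤ C.scale * C.ratio ^ n := mul_nonneg C.scale_nonneg (pow_nonneg C.ratio_nonneg n)
  rw [div_le_iff₀ (by linarith [C.ratio_le_half])]
  nlinarith [C.ratio_le_half]

theorem dist_point_le_of_mem_cylinder {ω ω' : ℕ → Fin N} {n : ℕ}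
    (h : ω' ∈ PiNat.cylinder ω n) :
    dist (C.point ω') (C.point ω) ≤ 4 * C.scale * C.ratio ^ n := by
  have := dist_triangle_left (C.point ω') (C.point ω) (C.node n ω)
  have := C.dist_node_point_le ω' n
  have := C.dist_node_point_le ω n
  rw [C.node_eq_of_mem_cylinder h] at *
  linarith

theorem lt_dist_point_of_notMem_cylinder {ω ω' : ℕ → Fin N} {n : ℕ}
    (h : ω' ∉ PiNat.cylinder ω n) :
    4 * C.scale * C.ratio ^ n < dist (C.point ω') (C.point ω) := by
  have hne : ω' ≠ ω := by rintro rfl; exact h (PiNat.self_mem_cylinder _ n)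
  set k := PiNat.firstDiff ω' ω
  have hkn : k + 1 ≤ n := by
    by_contra! hnk
    exact h ((PiNat.mem_cylinder_iff_le_firstDiff hne n).2 (Nat.lt_succ_iff.1 hnk))
  have hsplit : 8 * C.ratio * (C.scale * C.ratio ^ k) <
      dist (C.node (k + 1) ω') (C.node (k + 1) ω) := by
    rw [node, node, C.node_eq_of_mem_cylinder (PiNat.mem_cylinder_firstDiff ω' ω)]
    exact C.children_separated _ _ (PiNat.apply_firstDiff_ne hne)
  have := dist_triangle4 (C.node (k + 1) ω') (C.point ω') (C.point ω) (C.node (k + 1) ω)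
  have := C.dist_node_point_le ω' (k + 1)
  have := C.dist_node_point_le ω (k + 1)
  have : C.scale * C.ratio ^ n ≤ C.scale * C.ratio ^ (k + 1) :=
    mul_le_mul_of_nonneg_left (pow_le_pow_of_le_one C.ratio_nonneg C.ratio_lt_one.le hkn)
      C.scale_nonneg
  rw [dist_comm (C.point ω) (C.node (k + 1) ω)] at *
  linarith [show 8 * C.ratio * (C.scale * C.ratio ^ k) = 8 * (C.scale * C.ratio ^ (k + 1)) by
    ring]

theorem continuous_point : Continuous C.point := by
  refine Metric.continuous_iff'.2 fun ω ε hε ↦ ?_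
  have hscale : Tendsto (fun n ↦ 4 * C.scale * C.ratio ^ n) atTop (𝓝 0) := by
    simpa only [mul_zero] using
      (tendsto_pow_atTop_nhds_zero_of_lt_one C.ratio_nonneg C.ratio_lt_one).const_mul
        (4 * C.scale)
  obtain ⟨n, hn⟩ := (hscale.eventually (gt_mem_nhds hε)).exists
  filter_upwards [(PiNat.isOpen_cylinder _ ω n).mem_nhds (PiNat.self_mem_cylinder ω n)]
    with ω' hω'
  exact (C.dist_point_le_of_mem_cylinder hω').trans_lt hn

end CantorScheme

noncomputable def uniformSeqMeasure (N : ℕ) [NeZero N] : Measure (ℕ → Fin N) :=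
  Measure.infinitePi fun _ ↦ (PMF.uniformOfFintype (Fin N)).toMeasure

theorem uniformSeqMeasure_cylinder {N : ℕ} [NeZero N] (ω : ℕ → Fin N) (n : ℕ) :
    uniformSeqMeasure N (PiNat.cylinder ω n) = (N : ℝ≥0∞)⁻¹ ^ n := by
  rw [uniformSeqMeasure, PiNat.cylinder_eq_pi,
    Measure.infinitePi_pi _ fun _ _ ↦ measurableSet_singleton _]
  simp [PMF.toMeasure_apply_singleton _ _ (measurableSet_singleton _)]

section RegularImage

variable {X : Type*} [MetricSpace X] [MeasurableSpace X] [BorelSpace X] {N : ℕ} [NeZero N]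
  {π : (ℕ → Fin N) → X} {ρ δ t : ℝ}

theorem isRegularOn_map_uniformSeqMeasure (hπ : Continuous π) (hρ : 0 < ρ) (hδ0 : 0 < δ)
    (hδ1 : δ < 1) (ht : 0 ≤ t) (hδt : δ ^ t = (N : ℝ)⁻¹)
    (hclose : ∀ ω ω' n, ω' ∈ PiNat.cylinder ω n → dist (π ω') (π ω) ≤ ρ * δ ^ n)
    (hfar : ∀ ω ω' n, ω' ∉ PiNat.cylinder ω n → ρ * δ ^ n < dist (π ω') (π ω)) :
    IsRegularOn ((uniformSeqMeasure N).map π) t (range π) ((δ / ρ) ^ t) ((ρ * δ)⁻¹ ^ t) ρ := by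
  rintro _ ⟨ω, rfl⟩ r hr hrρ
  obtain ⟨n, hn, hn'⟩ :=
    exists_nat_pow_near_of_lt_one (div_pos hr hρ) ((div_le_one hρ).2 hrρ.le) hδ0 hδ1
  rw [lt_div_iff₀' hρ] at hn
  rw [div_le_iff₀' hρ] at hn'
  have hcyl : ∀ m, uniformSeqMeasure N (PiNat.cylinder ω m) = ENNReal.ofReal ((δ ^ m) ^ t) := by
    intro m
    rw [uniformSeqMeasure_cylinder, ← Real.rpow_pow_comm hδ0.le, hδt, ENNReal.ofReal_pow
      (by positivity), ENNReal.ofReal_inv_of_pos (by exact_mod_cast NeZero.pos N),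
      ENNReal.ofReal_natCast]
  rw [Measure.map_apply hπ.measurable measurableSet_closedBall]
  constructor
  · have hsub : PiNat.cylinder ω (n + 1) ⊆ π ⁻¹' closedBall (π ω) r := fun ω' hω' ↦
      (hclose ω ω' _ hω').trans hn.le
    calc ENNReal.ofReal ((δ / ρ) ^ t * r ^ t)
        = ENNReal.ofReal ((δ * (r / ρ)) ^ t) := by
          rw [← Real.mul_rpow (by positivity) hr.le]; ring_nf
      _ ≤ ENNReal.ofReal ((δ ^ (n + 1)) ^ t) := by
          rw [pow_succ, mul_comm]
          gcongr
          rwa [div_le_iff₀' hρ]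
      _ ≤ _ := (hcyl _).symm.le.trans (measure_mono hsub)
  · have hsub : π ⁻¹' closedBall (π ω) r ⊆ PiNat.cylinder ω n := fun ω' hω' ↦ by
      by_contra h
      exact (hn'.trans_lt (hfar ω ω' n h)).not_ge hω'
    calc uniformSeqMeasure N (π ⁻¹' closedBall (π ω) r)
        ≤ ENNReal.ofReal ((δ ^ n) ^ t) := (measure_mono hsub).trans (hcyl n).le
      _ ≤ ENNReal.ofReal ((r / (ρ * δ)) ^ t) := by
          gcongr
          rw [le_div_iff₀ (by positivity)]
          rw [pow_succ] at hn
          linarith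
      _ = ENNReal.ofReal ((ρ * δ)⁻¹ ^ t * r ^ t) := by
          rw [← Real.mul_rpow (by positivity) hr.le, div_eq_inv_mul]

theorem isRegularSet_range (hπ : Continuous π) (hρ : 0 < ρ) (hδ0 : 0 < δ)
    (hδ1 : δ < 1) (ht : 0 ≤ t) (hδt : δ ^ t = (N : ℝ)⁻¹)
    (hclose : ∀ ω ω' n, ω' ∈ PiNat.cylinder ω n → dist (π ω') (π ω) ≤ ρ * δ ^ n)
    (hfar : ∀ ω ω' n, ω' ∉ PiNat.cylinder ω n → ρ * δ ^ n < dist (π ω') (π ω)) :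
    IsRegularSet (range π) t := by
  refine ⟨(uniformSeqMeasure N).map π, _, _, ρ, by positivity, ?_, hρ,
    isRegularOn_map_uniformSeqMeasure hπ hρ hδ0 hδ1 ht hδt hclose hfar, ?_⟩
  · gcongr
    field_simp
    nlinarith
  · rw [Measure.map_apply hπ.measurable (isCompact_range hπ).isClosed.measurableSet.compl]
    simp

end RegularImage

theorem exists_branching_ratio {s t a : ℝ} (ht : 0 < t) (hts : t < s) (ha : 0 < a) (b : ℝ) :
    ∃ (N : ℕ) (δ : ℝ), 0 < N ∧ 0 < δ ∧ 8 * δ ≤ 1 ∧ δ ^ t = (N : ℝ)⁻¹ ∧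
      N * (b * (8 * δ) ^ s) ≤ a := by
  have hratio : Tendsto (fun x : ℝ ↦ x ^ (-t⁻¹)) atTop (𝓝 0) :=
    tendsto_rpow_neg_atTop (inv_pos.2 ht)
  have hmass : Tendsto (fun x : ℝ ↦ b * 8 ^ s * x ^ (-(s / t - 1))) atTop (𝓝 0) := by
    simpa only [mul_zero] using
      (tendsto_rpow_neg_atTop (sub_pos.2 ((one_lt_div ht).2 hts))).const_mul (b * 8 ^ s)
  obtain ⟨N, hN, hδ, hm⟩ := ((eventually_gt_atTop 0).and <|
    tendsto_natCast_atTop_atTop.eventually <|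
      (hratio.eventually (ge_mem_nhds (by norm_num : (0 : ℝ) < 1 / 8))).and
        (hmass.eventually (gt_mem_nhds ha))).exists
  have hN' : (0 : ℝ) < N := Nat.cast_pos.2 hN
  refine ⟨N, (N : ℝ) ^ (-t⁻¹), hN, by positivity, by linarith, ?_, ?_⟩
  · rw [← Real.rpow_mul hN'.le, neg_mul, inv_mul_cancel₀ ht.ne', Real.rpow_neg_one]
  · calc (N : ℝ) * (b * (8 * (N : ℝ) ^ (-t⁻¹)) ^ s)
        = b * 8 ^ s * (N : ℝ) ^ (1 + -t⁻¹ * s) := by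
          rw [Real.mul_rpow (by norm_num) (by positivity), ← Real.rpow_mul hN'.le,
            Real.rpow_add hN', Real.rpow_one]
          ring
      _ = b * 8 ^ s * (N : ℝ) ^ (-(s / t - 1)) := by congr 2; field_simp; ring
      _ ≤ a := hm.le

theorem stmt16_general {X : Type*} [MetricSpace X] [Nonempty X] [CompleteSpace X]
    [MeasurableSpace X] [BorelSpace X]
    (μ : Measure X) (s a b rμ : ℝ) (ha : 0 < a) (hrμ : 0 < rμ)
    (hreg : IsRegularOn μ s (Set.univ : Set X) a b rμ)
    (t : ℝ) (ht : 0 < t) (hts : t < s) :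
    ∃ F : Set X, F.Nonempty ∧ IsRegularSet F t := by
  obtain ⟨N, δ, hN, hδ0, hδ8, hδt, hcount⟩ := exists_branching_ratio ht hts ha b
  have : NeZero N := ⟨hN.ne'⟩
  have hR : 0 < rμ / 2 := half_pos hrμ
  have hpack (n : ℕ) (x : X) : ∃ f : Fin N → X, (∀ i, dist (f i) x ≤ rμ / 2 * δ ^ n) ∧
      Pairwise fun i j ↦ 8 * δ * (rμ / 2 * δ ^ n) < dist (f i) (f j) :=
    hreg.exists_separated_in_closedBall_of_ratio ha x (by positivity)
      ((mul_le_of_le_one_right hR.le (pow_le_one₀ hδ0.le (by linarith))).trans_lt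
        (half_lt_self hrμ)) (by positivity) hδ8 hcount
  choose children hnear hsep using hpack
  let C : CantorScheme X N := ⟨Classical.arbitrary X, children, rμ / 2, δ, hR.le, hδ0.le,
    by linarith, hnear, hsep⟩
  exact ⟨range C.point, range_nonempty _, isRegularSet_range C.continuous_point
    (by positivity : 0 < 4 * C.scale) hδ0 C.ratio_lt_one ht.le hδt
    (fun _ _ _ ↦ C.dist_point_le_of_mem_cylinder) (fun _ _ _ ↦ C.lt_dist_point_of_notMem_cylinder)⟩

/-- If `X` is a nonempty complete separable metric space carrying an
`s`-regular measure, then for every `0 < t < s` there is a nonempty `t`-regular set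
`F ⊆ X`. -/
theorem stmt16 {X : Type*} [MetricSpace X] [Nonempty X] [CompleteSpace X]
    [TopologicalSpace.SeparableSpace X] [MeasurableSpace X] [BorelSpace X]
    (μ : Measure X) (s a b rμ : ℝ) (hs : 0 < s) (ha : 0 < a) (hab : a ≤ b) (hrμ : 0 < rμ)
    (hreg : IsRegularOn μ s (Set.univ : Set X) a b rμ)
    (t : ℝ) (ht : 0 < t) (hts : t < s) :
    ∃ F : Set X, F.Nonempty ∧ IsRegularSet F t :=
  stmt16_general μ s a b rμ ha hrμ hreg t ht hts
end

section
/- Let X be a separable metric space carrying a measure μ which is s-regular on X with constants a_μ, b_μ and scale r_μ. Suppose A ⊆ X satisfies por(A,x,r) > ρ for all x ∈ A and all 0 < r < r_p, where 0 < ρ ≤ 1 and r_p > 0. Set l = (1/2)(a_μ/b_μ)^{1/s} and D = 2(1−l)^{-1} l^{-2}, and let k_0 ∈ ℕ be such that D^{-k_0} < min{r_p, r_μ}. Then A is ((1/3) l^2 ρ, D, 1, 1, k_0)-mean porous. -/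
open Metric MeasureTheory Set Filter
open scoped ENNReal NNReal Topology

open scoped Classical in
/-- `porCount A ρ D k₀ n x = S_{k₀,n}(x)`: the number of `k ∈ {k₀+1, …, k₀+n}` such that
the annulus `A_k(x) = {y : D^{-k} < d(x,y) ≤ D^{-k+1}}` contains a point `y` with
`dist(y,A) ≥ ρ d(y,x)`. -/
noncomputable def porCount {X : Type*} [MetricSpace X] (A : Set X) (ρ D : ℝ)
    (k₀ n : ℕ) (x : X) : ℕ :=
  ∑ k ∈ Finset.Icc (k₀ + 1) (k₀ + n),
    if ∃ y : X, (D ^ (-(k : ℝ)) < dist x y ∧ dist x y ≤ D ^ (-(k : ℝ) + 1)) ∧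
        ρ * dist y x ≤ Metric.infDist y A then 1 else 0

/-- `A` is `(ρ, D, p, n₀, k₀)`-mean porous: `S_{k₀,n}(x) ≥ p n` for all `x ∈ A`, `n ≥ n₀`. -/
def MeanPorous {X : Type*} [MetricSpace X] (A : Set X) (ρ D p : ℝ) (n₀ k₀ : ℕ) : Prop :=
  ∀ x ∈ A, ∀ n : ℕ, n₀ ≤ n → p * (n : ℝ) ≤ (porCount A ρ D k₀ n x : ℝ)

/-! Fix `T = D^{-k+1}` and `r = l²T/3`. If `A` meets the middle of the annulus `(D⁻¹T, T]`,
porosity at such a point at scale `r` gives a hole of radius `ρr` inside the annulus. Otherwise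
`A` stays away from the middle, and the point `z` with `l(T - 2r) < d(x,z) ≤ T - 2r` supplied by
the lower mass bound of `μ` (a ball of radius `T - 2r` cannot be contained in the much lighter
concentric ball of radius `l(T - 2r)`) is itself at distance `≥ r` from `A`; the value of `D` is
chosen so that `D⁻¹T + 3r ≤ l(T - 2r)`, which keeps `z` inside the annulus. Either way the
annulus contains a point `y` with `dist(y, A) ≥ ρr ≥ (l²ρ/3) d(x,y)`. -/

section Porosity

variable {X : Type*} [MetricSpace X] {A : Set X}

theorem le_infDist_of_closedBall_inter_eq_empty {y : X} {t : ℝ} (hA : A.Nonempty)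
    (h : closedBall y t ∩ A = ∅) : t ≤ infDist y A :=
  (le_infDist hA).2 fun v hv => by
    by_contra! hlt
    exact eq_empty_iff_forall_notMem.1 h v ⟨mem_closedBall'.2 hlt.le, hv⟩

theorem exists_dist_le_le_infDist_of_lt_por {x : X} {ρ r : ℝ} (hA : A.Nonempty) (hρ : 0 ≤ ρ)
    (hr : 0 ≤ r) (h : ρ < por A x r) : ∃ y, dist x y ≤ r ∧ ρ * r ≤ infDist y A := by
  obtain ⟨σ, ⟨hσ, y, hyA, hxy⟩, hρσ⟩ : ∃ σ ∈ {σ : ℝ | 0 ≤ σ ∧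
      ∃ y, closedBall y (σ * r) ∩ A = ∅ ∧ σ * r + dist x y ≤ r}, ρ < σ := by
    by_contra! hle
    exact h.not_ge (Real.sSup_le hle hρ)
  refine ⟨y, by nlinarith [mul_nonneg hσ hr], ?_⟩
  exact (mul_le_mul_of_nonneg_right hρσ.le hr).trans
    (le_infDist_of_closedBall_inter_eq_empty hA hyA)

theorem exists_dist_mem_Ioc_and_le_infDist {x z : X} {ρ r R T : ℝ} (hA : A.Nonempty)
    (hρ0 : 0 ≤ ρ) (hρ1 : ρ ≤ 1) (hr : 0 < r) (hpor : ∀ u ∈ A, ρ < por A u r)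
    (hz : R + 3 * r ≤ dist x z) (hzT : dist x z ≤ T - 2 * r) :
    ∃ y, dist x y ∈ Ioc R T ∧ ρ * r ≤ infDist y A := by
  by_cases hmid : ∃ u ∈ A, R + 2 * r ≤ dist x u ∧ dist x u ≤ T - r
  · obtain ⟨u, huA, hu⟩ := hmid
    obtain ⟨y, huy, hy⟩ := exists_dist_le_le_infDist_of_lt_por hA hρ0 hr.le (hpor u huA)
    refine ⟨y, ⟨?_, ?_⟩, hy⟩
    · linarith [dist_triangle x y u, dist_comm u y]
    · linarith [dist_triangle x u y]
  · push Not at hmid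
    refine ⟨z, ⟨by linarith, by linarith⟩, ?_⟩
    refine (mul_le_of_le_one_left hr.le hρ1).trans ((le_infDist hA).2 fun v hv => ?_)
    by_cases hfar : R + 2 * r ≤ dist x v
    · linarith [hmid v hv hfar, dist_triangle x z v]
    · linarith [dist_triangle x v z, dist_comm v z]

theorem IsRegularOn.exists_dist_mem_Ioc [MeasurableSpace X] {μ : Measure X} {s a b rμ : ℝ}
    {E : Set X} (hreg : IsRegularOn μ s E a b rμ) (ha : 0 < a) {l : ℝ} (hl0 : 0 < l)
    (hl1 : l ≤ 1) (hlab : b * l ^ s < a) {w : X} (hw : w ∈ E) {t : ℝ} (ht : 0 < t)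
    (htμ : t < rμ) : ∃ z, dist w z ∈ Ioc (l * t) t := by
  by_contra! hc
  have hsub : closedBall w t ⊆ closedBall w (l * t) := fun z hz =>
    mem_closedBall'.2 (not_lt.1 fun hlt => hc z ⟨hlt, mem_closedBall'.1 hz⟩)
  have hmass : ENNReal.ofReal (a * t ^ s) ≤ ENNReal.ofReal (b * (l * t) ^ s) :=
    (hreg w hw t ht htμ).1.trans <| (measure_mono hsub).trans
      (hreg w hw (l * t) (by positivity) (by nlinarith)).2
  rw [ENNReal.ofReal_le_ofReal_iff', Real.mul_rpow hl0.le ht.le] at hmass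
  have hts : 0 < t ^ s := Real.rpow_pos_of_pos ht s
  rcases hmass with h | h <;> nlinarith [mul_lt_mul_of_pos_right hlab hts]

theorem meanPorous_one_of_forall_exists {ρ D : ℝ} {n₀ k₀ : ℕ}
    (h : ∀ x ∈ A, ∀ k : ℕ, k₀ < k → ∃ y, (D ^ (-(k : ℝ)) < dist x y ∧
      dist x y ≤ D ^ (-(k : ℝ) + 1)) ∧ ρ * dist y x ≤ infDist y A) :
    MeanPorous A ρ D 1 n₀ k₀ := by
  intro x hx n _
  have hcount : porCount A ρ D k₀ n x = n := by
    unfold porCount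
    rw [Finset.sum_congr rfl fun k hk => if_pos (h x hx k (by simp at hk; omega))]
    simp
  simp [hcount]

end Porosity

theorem half_mul_rpow_div_bounds {s a b l : ℝ} (hs : 0 < s) (ha : 0 < a) (hab : a ≤ b)
    (hl : l = 1 / 2 * (a / b) ^ (1 / s)) : 0 < l ∧ l ≤ 1 / 2 ∧ b * l ^ s < a := by
  have hb : 0 < b := ha.trans_le hab
  have hq : 0 < (a / b) ^ (1 / s) := Real.rpow_pos_of_pos (div_pos ha hb) _
  have hq1 : (a / b) ^ (1 / s) ≤ 1 :=
    Real.rpow_le_one (div_pos ha hb).le ((div_le_one hb).2 hab) (by positivity)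
  have hls : l ^ s = (1 / 2) ^ s * (a / b) := by
    rw [hl, Real.mul_rpow (by norm_num) hq.le, ← Real.rpow_mul (div_pos ha hb).le,
      one_div_mul_cancel hs.ne', Real.rpow_one]
  have hhalf : (1 / 2 : ℝ) ^ s < 1 := Real.rpow_lt_one (by norm_num) (by norm_num) hs
  refine ⟨by rw [hl]; positivity, by rw [hl]; linarith, ?_⟩
  rw [hls, mul_comm, mul_assoc, div_mul_cancel₀ a hb.ne']
  nlinarith

theorem stmt17_general {X : Type*} [MetricSpace X]
    [MeasurableSpace X] (μ : Measure X) (s a b rμ : ℝ)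
    (hs : 0 < s) (ha : 0 < a) (hab : a ≤ b)
    (hreg : IsRegularOn μ s (Set.univ : Set X) a b rμ)
    (A : Set X) (ρ rp : ℝ) (hρ : 0 < ρ) (hρ1 : ρ ≤ 1)
    (hpor : ∀ x ∈ A, ∀ r : ℝ, 0 < r → r < rp → ρ < por A x r)
    (l D : ℝ) (hl : l = 1 / 2 * (a / b) ^ (1 / s)) (hD : D = 2 * (1 - l)⁻¹ * (l ^ 2)⁻¹)
    (k₀ : ℕ) (hk₀ : D ^ (-(k₀ : ℝ)) < min rp rμ) :
    MeanPorous A (1 / 3 * l ^ 2 * ρ) D 1 1 k₀ := by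
  obtain ⟨hl0, hl2, hlab⟩ := half_mul_rpow_div_bounds hs ha hab hl
  have hDinv : D⁻¹ = (1 - l) * l ^ 2 / 2 := by
    rw [hD]
    field_simp [(by linarith : 1 - l ≠ 0)]
  have hD0 : 0 < D := inv_pos.1 (by rw [hDinv]; nlinarith)
  have hD1 : 1 ≤ D := (inv_le_one₀ hD0).1 (by rw [hDinv]; nlinarith)
  have hgap : D⁻¹ + l ^ 2 ≤ l * (1 - 2 * l ^ 2 / 3) := by rw [hDinv]; nlinarith
  refine meanPorous_one_of_forall_exists fun x hx k hk => ?_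
  set T := D ^ (-(k : ℝ) + 1)
  have hT0 : 0 < T := by positivity
  have hTk : D ^ (-(k : ℝ)) = D⁻¹ * T := by
    rw [← Real.rpow_neg_one, ← Real.rpow_add hD0]
    ring_nf
  have hTmin : T < min rp rμ := by
    refine (Real.rpow_le_rpow_of_exponent_le hD1 ?_).trans_lt hk₀
    have : (k₀ : ℝ) + 1 ≤ k := by exact_mod_cast hk
    linarith
  have hTrp := hTmin.trans_le (min_le_left _ _)
  have hTrμ := hTmin.trans_le (min_le_right _ _)
  have hr : 0 < l ^ 2 * T / 3 := by positivity
  obtain ⟨z, hz⟩ := hreg.exists_dist_mem_Ioc ha hl0 (by linarith) hlab (mem_univ x)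
    (t := T - 2 * (l ^ 2 * T / 3)) (by nlinarith) (by nlinarith)
  obtain ⟨y, hy, hyA⟩ := exists_dist_mem_Ioc_and_le_infDist ⟨x, hx⟩ hρ.le hρ1 hr
    (fun u hu => hpor u hu _ hr (by nlinarith)) (R := D⁻¹ * T) (T := T)
    (by nlinarith [mul_le_mul_of_nonneg_right hgap hT0.le, hz.1]) hz.2
  refine ⟨y, hTk ▸ hy, ?_⟩
  calc 1 / 3 * l ^ 2 * ρ * dist y x ≤ 1 / 3 * l ^ 2 * ρ * T := by
        rw [dist_comm]; gcongr; exact hy.2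
    _ = ρ * (l ^ 2 * T / 3) := by ring
    _ ≤ infDist y A := hyA

/-- Suppose `μ` is `s`-regular on `X` and `por A x r > ρ` for all
`x ∈ A` and `0 < r < r_p`. Set `l = (1/2)(a_μ/b_μ)^{1/s}` and `D = 2(1-l)⁻¹ l⁻²`, and let
`k₀ ∈ ℕ` satisfy `D^{-k₀} < min{r_p, r_μ}`. Then `A` is
`((1/3) l² ρ, D, 1, 1, k₀)`-mean porous. -/
theorem stmt17 {X : Type*} [MetricSpace X] [TopologicalSpace.SeparableSpace X]
    [MeasurableSpace X] [BorelSpace X] (μ : Measure X) (s a b rμ : ℝ)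
    (hs : 0 < s) (ha : 0 < a) (hab : a ≤ b) (hrμ : 0 < rμ)
    (hreg : IsRegularOn μ s (Set.univ : Set X) a b rμ)
    (A : Set X) (ρ rp : ℝ) (hρ : 0 < ρ) (hρ1 : ρ ≤ 1) (hrp : 0 < rp)
    (hpor : ∀ x ∈ A, ∀ r : ℝ, 0 < r → r < rp → ρ < por A x r)
    (l D : ℝ) (hl : l = 1 / 2 * (a / b) ^ (1 / s)) (hD : D = 2 * (1 - l)⁻¹ * (l ^ 2)⁻¹)
    (k₀ : ℕ) (hk₀ : D ^ (-(k₀ : ℝ)) < min rp rμ) :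
    MeanPorous A (1 / 3 * l ^ 2 * ρ) D 1 1 k₀ :=
  stmt17_general μ s a b rμ hs ha hab hreg A ρ rp hρ hρ1 hpor l D hl hD k₀ hk₀
end

section
/- Let X be a separable metric space and suppose A ⊆ X satisfies por(A,x,r) > ρ for all x ∈ A and all 0 < r < r_p, where 0 < ρ < 1 and r_p > 0. Let D > 1 and choose k_0 ∈ ℕ with D^{-k_0} < r_p. Then A is (ρ, D, p, n_0, k_0)-mean porous with n_0 = −⌊log ρ / log D⌋ and p = (1/2) n_0^{-1} = −(1/2) ⌊log ρ / log D⌋^{-1}, where ⌊a⌋ denotes the greatest integer i with i ≤ a. -/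
open Metric MeasureTheory Set Filter
open scoped ENNReal NNReal Topology

/-!
A point `x ∈ A` with `por A x r > ρ` has, at every scale `r < r_p`, a point `y` with
`ρ r < d(x, y) ≤ r` and `dist(y, A) ≥ ρ d(x, y)`. Since `D^{-n₀} ≤ ρ`, taking `r = D^{-k+1}`
puts `y` in one of the `n₀` annuli `A_k(x), …, A_{k+n₀-1}(x)`. So each of the `⌊n / n₀⌋`
consecutive blocks of `n₀` annuli in `{k₀+1, …, k₀+n}` contributes to `S_{k₀,n}(x)`,
and `⌊n / n₀⌋ ≥ n / (2 n₀)` once `n ≥ n₀`.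
-/

/-- The indicator `ψ_k(x) = 1` of the paper. -/
def PorousAnnulus {X : Type*} [MetricSpace X] (A : Set X) (ρ D : ℝ) (x : X) (k : ℕ) : Prop :=
  ∃ y : X, (D ^ (-(k : ℝ)) < dist x y ∧ dist x y ≤ D ^ (-(k : ℝ) + 1)) ∧
    ρ * dist y x ≤ infDist y A

open scoped Classical in
theorem porCount_eq_card_filter {X : Type*} [MetricSpace X] (A : Set X) (ρ D : ℝ)
    (k₀ n : ℕ) (x : X) :
    porCount A ρ D k₀ n x =
      ((Finset.Ico (k₀ + 1) (k₀ + 1 + n)).filter (PorousAnnulus A ρ D x)).card := by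
  rw [Finset.card_filter, porCount]
  congr 1
  ext k
  simp only [Finset.mem_Icc, Finset.mem_Ico]
  omega

theorem exists_far_point_of_lt_por {X : Type*} [MetricSpace X] {A : Set X} {x : X}
    {ρ r : ℝ} (hx : x ∈ A) (hρ : 0 ≤ ρ) (hr : 0 < r) (hpor : ρ < por A x r) :
    ∃ y : X, ρ * r < dist x y ∧ dist x y ≤ r ∧ ρ * dist y x ≤ infDist y A := by
  obtain ⟨ρ', ⟨-, y, hball, hsum⟩, hρρ'⟩ :
      ∃ ρ' ∈ {ρ : ℝ | 0 ≤ ρ ∧ ∃ y : X,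
        closedBall y (ρ * r) ∩ A = ∅ ∧ ρ * r + dist x y ≤ r}, ρ < ρ' := by
    by_contra! h
    exact (Real.sSup_le h hρ).not_gt hpor
  have hdisj : ∀ z ∈ A, ρ' * r < dist z y := fun z hz => by
    by_contra! h
    exact (Set.eq_empty_iff_forall_notMem.mp hball) z ⟨mem_closedBall.mpr h, hz⟩
  have hρr : ρ * r ≤ ρ' * r := mul_le_mul_of_nonneg_right hρρ'.le hr.le
  have hxy : ρ' * r < dist x y := hdisj x hx
  have hxy_le : dist x y ≤ r := by linarith [mul_nonneg (hρ.trans hρρ'.le) hr.le]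
  refine ⟨y, hρr.trans_lt hxy, hxy_le, ?_⟩
  calc ρ * dist y x ≤ ρ * r := mul_le_mul_of_nonneg_left (dist_comm y x ▸ hxy_le) hρ
    _ ≤ ρ' * r := hρr
    _ ≤ infDist y A :=
      (le_infDist ⟨x, hx⟩).mpr fun z hz => (dist_comm y z ▸ hdisj z hz).le

theorem exists_mem_annulus {D t : ℝ} {k J : ℕ} (hkJ : k ≤ J) (hJ : D ^ (-(J : ℝ)) < t)
    (hk : t ≤ D ^ (-(k : ℝ) + 1)) :
    ∃ j, k ≤ j ∧ j ≤ J ∧ D ^ (-(j : ℝ)) < t ∧ t ≤ D ^ (-(j : ℝ) + 1) := by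
  induction J, hkJ using Nat.le_induction with
  | base => exact ⟨k, le_rfl, le_rfl, hJ, hk⟩
  | succ J hkJ ih =>
    by_cases hJt : D ^ (-(J : ℝ)) < t
    · obtain ⟨j, hkj, hjJ, hj⟩ := ih hJt
      exact ⟨j, hkj, hjJ.trans J.le_succ, hj⟩
    · refine ⟨J + 1, hkJ.trans J.le_succ, le_rfl, hJ, ?_⟩
      rw [show -((J + 1 : ℕ) : ℝ) + 1 = -(J : ℝ) by push_cast; ring]
      exact not_lt.mp hJt

theorem le_card_filter_Ico_of_forall_block {P : ℕ → Prop} [DecidablePred P] {a N : ℕ}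
    (hblock : ∀ k, a ≤ k → ∃ j, k ≤ j ∧ j < k + N ∧ P j) (q : ℕ) :
    q ≤ ((Finset.Ico a (a + q * N)).filter P).card := by
  induction q with
  | zero => exact Nat.zero_le _
  | succ q ih =>
    obtain ⟨j, hj₁, hj₂, hPj⟩ := hblock (a + q * N) (Nat.le_add_right a _)
    have hsplit : Finset.Ico a (a + (q + 1) * N) =
        Finset.Ico a (a + q * N) ∪ Finset.Ico (a + q * N) (a + (q + 1) * N) :=
      (Finset.Ico_union_Ico_eq_Ico (Nat.le_add_right a _) (by gcongr; omega)).symm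
    have hblock_pos : 0 < ((Finset.Ico (a + q * N) (a + (q + 1) * N)).filter P).card :=
      Finset.card_pos.mpr
        ⟨j, Finset.mem_filter.mpr ⟨Finset.mem_Ico.mpr ⟨hj₁, by linarith⟩, hPj⟩⟩
    rw [hsplit, Finset.filter_union, Finset.card_union_of_disjoint
      (Finset.disjoint_filter_filter (Finset.Ico_disjoint_Ico_consecutive _ _ _))]
    omega

theorem cast_div_two_mul_le_nat_div {n N : ℕ} (hN : 0 < N) (hNn : N ≤ n) :
    (n : ℝ) / (2 * N) ≤ (n / N : ℕ) := by
  have hq : 1 ≤ n / N := (Nat.one_le_div_iff hN).mpr hNn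
  have hn : n ≤ 2 * N * (n / N) := by
    have := Nat.lt_div_mul_add (a := n) hN
    nlinarith
  rw [div_le_iff₀ (by positivity)]
  exact_mod_cast (by linarith : n ≤ n / N * (2 * N))

theorem rpow_floor_logb_le {ρ D : ℝ} (hρ : 0 < ρ) (hD : 1 < D) :
    D ^ (⌊Real.logb D ρ⌋ : ℝ) ≤ ρ :=
  (Real.le_logb_iff_rpow_le hD hρ).mp (Int.floor_le _)

theorem exists_porousAnnulus_of_lt_por {X : Type*} [MetricSpace X] {A : Set X} {x : X}
    {ρ rp D : ℝ} {k₀ N : ℕ} (hx : x ∈ A) (hρ : 0 ≤ ρ) (hD : 1 < D)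
    (hpor : ∀ r : ℝ, 0 < r → r < rp → ρ < por A x r) (hk₀ : D ^ (-(k₀ : ℝ)) < rp)
    (hN : 0 < N) (hDN : D ^ (-(N : ℝ)) ≤ ρ) (k : ℕ) (hk : k₀ + 1 ≤ k) :
    ∃ j, k ≤ j ∧ j < k + N ∧ PorousAnnulus A ρ D x j := by
  have hD0 : 0 < D := one_pos.trans hD
  have hr : D ^ (-(k : ℝ) + 1) < rp := lt_of_le_of_lt
    (Real.rpow_le_rpow_of_exponent_le hD.le
      (by linarith [(by exact_mod_cast hk : (k₀ : ℝ) + 1 ≤ k)])) hk₀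
  obtain ⟨y, hρy, hy, hyA⟩ :=
    exists_far_point_of_lt_por hx hρ (by positivity) (hpor _ (by positivity) hr)
  have hfar : D ^ (-((k + N - 1 : ℕ) : ℝ)) < dist x y := by
    calc D ^ (-((k + N - 1 : ℕ) : ℝ)) = D ^ (-(N : ℝ)) * D ^ (-(k : ℝ) + 1) := by
          rw [← Real.rpow_add hD0, Nat.cast_sub (by omega)]; push_cast; ring_nf
      _ ≤ ρ * D ^ (-(k : ℝ) + 1) := by gcongr
      _ < dist x y := hρy
  obtain ⟨j, hkj, hjN, hj⟩ := exists_mem_annulus (by omega) hfar hy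
  exact ⟨j, hkj, by omega, y, hj, hyA⟩

theorem stmt18_general {X : Type*} [MetricSpace X]
    (A : Set X) (ρ rp D : ℝ) (hρ : 0 < ρ) (hρ1 : ρ < 1) (hD : 1 < D)
    (hpor : ∀ x ∈ A, ∀ r : ℝ, 0 < r → r < rp → ρ < por A x r)
    (k₀ : ℕ) (hk₀ : D ^ (-(k₀ : ℝ)) < rp) :
    MeanPorous A ρ D (-(1 / 2) * ((⌊Real.log ρ / Real.log D⌋ : ℝ))⁻¹)
      (-⌊Real.log ρ / Real.log D⌋).toNat k₀ := by
  rw [Real.log_div_log]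
  set m := ⌊Real.logb D ρ⌋
  have hm : m < 0 := Int.floor_lt.mpr (by exact_mod_cast Real.logb_neg hD hρ hρ1)
  set N := (-m).toNat
  have hNm : (N : ℤ) = -m := Int.toNat_of_nonneg (by omega)
  have hmN : (m : ℝ) = -N := by exact_mod_cast (by omega : m = -(N : ℤ))
  have hN : 0 < N := by omega
  have hDN : D ^ (-(N : ℝ)) ≤ ρ := hmN ▸ rpow_floor_logb_le hρ hD
  intro x hx n hn
  calc -(1 / 2) * (m : ℝ)⁻¹ * n = n / (2 * N) := by rw [hmN]; field_simp
    _ ≤ (n / N : ℕ) := cast_div_two_mul_le_nat_div hN hn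
    _ ≤ porCount A ρ D k₀ n x := by
      classical
      rw [porCount_eq_card_filter]
      exact_mod_cast (le_card_filter_Ico_of_forall_block
          (exists_porousAnnulus_of_lt_por hx hρ.le hD (hpor x hx) hk₀ hN hDN) _).trans
        (Finset.card_le_card (Finset.filter_subset_filter _
          (Finset.Ico_subset_Ico_right (by linarith [Nat.div_mul_le_self n N]))))

/-- Suppose `por A x r > ρ` for all `x ∈ A` and `0 < r < r_p`, where
`0 < ρ < 1`. Let `D > 1` and let `k₀ ∈ ℕ` satisfy `D^{-k₀} < r_p`. Then `A` is
`(ρ, D, p, n₀, k₀)`-mean porous with `n₀ = -⌊log ρ / log D⌋` and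
`p = -(1/2) ⌊log ρ / log D⌋⁻¹`. -/
theorem stmt18 {X : Type*} [MetricSpace X] [TopologicalSpace.SeparableSpace X]
    (A : Set X) (ρ rp D : ℝ) (hρ : 0 < ρ) (hρ1 : ρ < 1) (hrp : 0 < rp) (hD : 1 < D)
    (hpor : ∀ x ∈ A, ∀ r : ℝ, 0 < r → r < rp → ρ < por A x r)
    (k₀ : ℕ) (hk₀ : D ^ (-(k₀ : ℝ)) < rp) :
    MeanPorous A ρ D (-(1 / 2) * ((⌊Real.log ρ / Real.log D⌋ : ℝ))⁻¹)
      (-⌊Real.log ρ / Real.log D⌋).toNat k₀ :=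
  stmt18_general A ρ rp D hρ hρ1 hD hpor k₀ hk₀
end
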